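/- arXiv:2407.00755 — 19 statements merged into one kernel-verified Lean document; each statement's English description precedes it below -/
import Mathlib

section
/- Let (X, σ, τ) be a 2-permutational solution. Then for all x, y, z ∈ X: (1) σ_{τ_x⁻¹(y)} = σ_{σ_z(y)}; (2) τ_{σ_x⁻¹(y)} = τ_{τ_z(y)}; (3) σ_{τ_x(σ_z(y))} = σ_{σ_z(τ_x(y))} = σ_y; (4) τ_{σ_x(τ_z(y))} = τ_{τ_z(σ_x(y))} = τ_y; (5) σ_{σ_y⁻¹(x)} = σ_{τ_z(x)}; (6) τ_{τ_y⁻¹(x)} = τ_{σ_z(x)}. -/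
/-- A (non-degenerate set-theoretic) solution of the Yang-Baxter equation,
given by two families of permutations satisfying (B1)-(B3). -/
def IsSolution {X : Type*} (σ τ : X → Equiv.Perm X) : Prop :=
  (∀ x y : X, σ x * σ y = σ (σ x y) * σ (τ y x)) ∧
  (∀ x y : X, τ x * τ y = τ (τ x y) * τ (σ y x)) ∧
  (∀ x y z : X, τ (σ (τ y x) z) (σ x y) = σ (τ (σ y z) x) (τ z y))

/-- A solution is 2-permutational. -/
def Is2Permutational {X : Type*} (σ τ : X → Equiv.Perm X) : Prop :=
  (∀ x y z : X, σ (σ x z) = σ (σ y z)) ∧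
  (∀ x y z : X, τ (τ x z) = τ (τ y z)) ∧
  (∀ x y z : X, σ (τ x z) = σ (τ y z)) ∧
  (∀ x y z : X, τ (σ x z) = τ (σ y z))

theorem stmt_0 {X : Type*} (σ τ : X → Equiv.Perm X)
    (hsol : IsSolution σ τ) (hper : Is2Permutational σ τ) :
    ∀ x y z : X,
      σ ((τ x)⁻¹ y) = σ (σ z y) ∧
      τ ((σ x)⁻¹ y) = τ (τ z y) ∧
      (σ (τ x (σ z y)) = σ (σ z (τ x y)) ∧ σ (σ z (τ x y)) = σ y) ∧
      (τ (σ x (τ z y)) = τ (τ z (σ x y)) ∧ τ (τ z (σ x y)) = τ y) ∧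
      σ ((σ y)⁻¹ x) = σ (τ z x) ∧
      τ ((τ y)⁻¹ x) = τ (σ z x) := by
  obtain ⟨B1, B2, B3⟩ := hsol
  obtain ⟨P1, P2, P3, P4⟩ := hper
  -- Key lemma 1: σ (σ z (τ c x)) = σ x
  have k1 : ∀ c x z : X, σ (σ z (τ c x)) = σ x := by
    intro c x z
    have h := B1 x (τ c x)
    rw [P3 (τ c x) c x] at h
    have h2 : σ x = σ (σ x (τ c x)) := mul_right_cancel h
    rw [P1 z x (τ c x)]
    exact h2.symm
  -- Dual key lemma 1: τ (τ z (σ c x)) = τ x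
  have k1' : ∀ c x z : X, τ (τ z (σ c x)) = τ x := by
    intro c x z
    have h := B2 x (σ c x)
    rw [P4 (σ c x) c x] at h
    have h2 : τ x = τ (τ x (σ c x)) := mul_right_cancel h
    rw [P2 z x (σ c x)]
    exact h2.symm
  -- Key lemma 2: σ (τ u (σ x y)) = σ y
  have k2 : ∀ u x y : X, σ (τ u (σ x y)) = σ y := by
    intro u x y
    have h := congrArg σ (B3 x y y)
    rw [P3 u (σ (τ y x) y) (σ x y), h]
    exact k1 y y _
  -- Dual key lemma 2: τ (σ u (τ z y)) = τ y
  have k2' : ∀ u z y : X, τ (σ u (τ z y)) = τ y := by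
    intro u z y
    have h := congrArg τ (B3 y y z)
    rw [P4 u (τ (σ y z) y) (τ z y), ← h]
    exact k1' y y _
  intro x y z
  refine ⟨?_, ?_, ⟨(k2 x z y).trans (k1 x y z).symm, k1 x y z⟩,
    ⟨(k2' x z y).trans (k1' x y z).symm, k1' x y z⟩, ?_, ?_⟩
  · have := k1 x ((τ x)⁻¹ y) z
    rw [Equiv.Perm.coe_inv, Equiv.apply_symm_apply] at this; exact this.symm
  · have := k1' x ((σ x)⁻¹ y) z
    rw [Equiv.Perm.coe_inv, Equiv.apply_symm_apply] at this; exact this.symm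
  · have := k2 z y ((σ y)⁻¹ x)
    rw [Equiv.Perm.coe_inv, Equiv.apply_symm_apply] at this; exact this.symm
  · have := k2' z y ((τ y)⁻¹ x)
    rw [Equiv.Perm.coe_inv, Equiv.apply_symm_apply] at this; exact this.symm
end

section
/- Every solution that is both 2-permutational and distributive is 2-reductive. -/
/-- A solution is 2-reductive. -/
def Is2Reductive {X : Type*} (σ τ : X → Equiv.Perm X) : Prop :=
  (∀ x y : X, σ (σ x y) = σ y) ∧
  (∀ x y : X, τ (τ x y) = τ y) ∧
  (∀ x y : X, σ (τ x y) = σ y) ∧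
  (∀ x y : X, τ (σ x y) = τ y)

/-- A solution is (left and right) distributive. -/
def IsDistributive {X : Type*} (σ τ : X → Equiv.Perm X) : Prop :=
  (∀ x y : X, σ x * σ y = σ (σ x y) * σ x) ∧
  (∀ x y : X, τ x * τ y = τ (τ x y) * τ x)

/-- A solution is involutive. -/
def IsInvolutive {X : Type*} (σ τ : X → Equiv.Perm X) : Prop :=
  (∀ x y : X, σ (σ x y) (τ y x) = x) ∧
  (∀ x y : X, τ (τ y x) (σ x y) = y)

/-- A permutation is an automorphism of a solution. -/
def IsAuto {X : Type*} (σ τ : X → Equiv.Perm X) (φ : Equiv.Perm X) : Prop :=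
  (∀ x : X, φ * σ x = σ (φ x) * φ) ∧ (∀ x : X, φ * τ x = τ (φ x) * φ)

/-- Every 2-permutational and distributive solution is 2-reductive. -/
theorem stmt_1 {X : Type*} (σ τ : X → Equiv.Perm X)
    (hsol : IsSolution σ τ) (hper : Is2Permutational σ τ)
    (hdis : IsDistributive σ τ) :
    Is2Reductive σ τ := by
  obtain ⟨b1, b2, _⟩ := hsol
  obtain ⟨p1, p2, _, _⟩ := hper
  obtain ⟨d1, d2⟩ := hdis
  refine ⟨?_, ?_, ?_, ?_⟩
  · intro x y
    have h1 : σ (σ y y) = σ y := mul_right_cancel (d1 y y).symm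
    rw [p1 x y y, h1]
  · intro x y
    have h1 : τ (τ y y) = τ y := mul_right_cancel (d2 y y).symm
    rw [p2 x y y, h1]
  · intro x y
    exact mul_left_cancel ((b1 y x).symm.trans (d1 y x))
  · intro x y
    exact mul_left_cancel ((b2 y x).symm.trans (d2 y x))
end

section
/- Let (X, σ, τ) be a 2-permutational solution. Then for all x, y, z, a, b ∈ X: (1) σ_y⁻¹∘σ_x = σ_{τ_z(x)}∘σ_{τ_b(y)}⁻¹; (2) τ_x∘τ_y⁻¹ = τ_{σ_b⁻¹(y)}⁻¹∘τ_{σ_z⁻¹(x)}; (3) σ_x∘τ_z = τ_{σ_a(z)}∘σ_{σ_b(x)}; (4) σ_x⁻¹∘τ_z = τ_{σ_a⁻¹(z)}∘σ_{σ_b(x)}⁻¹; (5) σ_{σ_x(y)}∘σ_{σ_a(z)} = σ_{σ_x(σ_a(z))}∘σ_y; (6) τ_{τ_x(y)}∘τ_{τ_a(z)} = τ_{τ_x(τ_a(z))}∘τ_y. -/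
theorem stmt_2 {X : Type*} (σ τ : X → Equiv.Perm X)
    (hsol : IsSolution σ τ) (hper : Is2Permutational σ τ) :
    ∀ x y z a b : X,
      ((σ y)⁻¹ * σ x = σ (τ z x) * (σ (τ b y))⁻¹) ∧
      (τ x * (τ y)⁻¹ = (τ ((σ b)⁻¹ y))⁻¹ * τ ((σ z)⁻¹ x)) ∧
      (σ x * τ z = τ (σ a z) * σ (σ b x)) ∧
      ((σ x)⁻¹ * τ z = τ ((σ a)⁻¹ z) * (σ (σ b x))⁻¹) ∧
      (σ (σ x y) * σ (σ a z) = σ (σ x (σ a z)) * σ y) ∧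
      (τ (τ x y) * τ (τ a z) = τ (τ x (τ a z)) * τ y) := by
  obtain ⟨B1, B2, B3⟩ := hsol
  obtain ⟨P1, P2, P3, P4⟩ := hper
  -- basic lemmas
  have hs1 : ∀ w y : X, σ (τ y (σ w y)) = σ y := by
    intro w y
    have h := B1 (σ w y) y
    rw [P1 (σ w y) w y] at h
    exact (mul_left_cancel h).symm
  have hs1' : ∀ w y : X, τ (σ y (τ w y)) = τ y := by
    intro w y
    have h := B2 (τ w y) y
    rw [P2 (τ w y) w y] at h
    exact (mul_left_cancel h).symm
  have hBσ : ∀ c x y : X, σ (τ c (σ x y)) = σ y := fun c x y =>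
    (P3 c y (σ x y)).trans (hs1 x y)
  have hBτ : ∀ c x y : X, τ (σ c (τ x y)) = τ y := fun c x y =>
    (P4 c y (τ x y)).trans (hs1' x y)
  have hL : ∀ c d x y z : X, σ (τ c (σ x y)) = σ (σ d (τ z y)) := by
    intro c d x y z
    calc σ (τ c (σ x y)) = σ (τ (σ (τ y x) z) (σ x y)) := P3 c (σ (τ y x) z) (σ x y)
      _ = σ (σ (τ (σ y z) x) (τ z y)) := by rw [B3 x y z]
      _ = σ (σ d (τ z y)) := P1 (τ (σ y z) x) d (τ z y)
  have hL' : ∀ c d x y z : X, τ (τ c (σ x y)) = τ (σ d (τ z y)) := by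
    intro c d x y z
    calc τ (τ c (σ x y)) = τ (τ (σ (τ y x) z) (σ x y)) := P2 c (σ (τ y x) z) (σ x y)
      _ = τ (σ (τ (σ y z) x) (τ z y)) := by rw [B3 x y z]
      _ = τ (σ d (τ z y)) := P4 (τ (σ y z) x) d (τ z y)
  have hA : ∀ d z y : X, σ (σ d (τ z y)) = σ y := fun d z y =>
    (hL y d y y z).symm.trans (hBσ y y y)
  have hC : ∀ c x y : X, τ (τ c (σ x y)) = τ y := fun c x y =>
    (hL' c y x y y).trans (hBτ y y y)
  -- part (3) as a universally quantified statement
  have h3 : ∀ x z a b : X, σ x * τ z = τ (σ a z) * σ (σ b x) := by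
    intro x z a b
    have hB3' : ∀ a c x y z : X, τ (σ a z) (σ x y) = σ (τ c x) (τ z y) := by
      intro a c x y z
      have h := B3 x y z
      rw [P4 (τ y x) a z, P3 (σ y z) c x] at h
      exact h
    ext t
    have h := hB3' a x (σ b x) t z
    rw [hBσ x b x] at h
    simp only [Equiv.Perm.mul_apply]
    exact h.symm
  intro x y z a b
  refine ⟨?_, ?_, h3 x z a b, ?_, ?_, ?_⟩
  · -- (1)
    have h := B1 x (τ b y)
    rw [hA x b y, P3 (τ b y) z x] at h
    rw [eq_mul_inv_iff_mul_eq, mul_assoc, inv_mul_eq_iff_eq_mul]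
    exact h
  · -- (2)
    set u := (σ z)⁻¹ x with hu
    set v := (σ b)⁻¹ y with hv
    have hy : σ b v = y := Equiv.apply_symm_apply (σ b) y
    have hx : σ z u = x := Equiv.apply_symm_apply (σ z) x
    have h := B2 u (σ b v)
    rw [hC u b v, P4 (σ b v) z u, hx, hy] at h
    rw [eq_inv_mul_iff_mul_eq, ← mul_assoc, mul_inv_eq_iff_eq_mul]
    exact h.symm
  · -- (4)
    set w := (σ a)⁻¹ z with hw
    have hz : σ a w = z := Equiv.apply_symm_apply (σ a) z
    have h := h3 x w a b
    rw [hz] at h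
    rw [eq_mul_inv_iff_mul_eq, mul_assoc, inv_mul_eq_iff_eq_mul]
    exact h.symm
  · -- (5)
    have h := B1 (σ x y) (σ a z)
    rw [P1 (σ x y) x (σ a z), hBσ (σ a z) x y] at h
    exact h
  · -- (6)
    have h := B2 (τ x y) (τ a z)
    rw [P2 (τ x y) x (τ a z), hBτ (τ a z) x y] at h
    exact h
end

section
/- Every 2-permutational solution is entropic; that is, for all x, y, z, u ∈ X the following four identities hold: σ_{σ_x(y)}(σ_z(u)) = σ_{σ_x(z)}(σ_y(u)); τ_{τ_x(y)}(τ_z(u)) = τ_{τ_x(z)}(τ_y(u)); τ_{σ_x(y)}(σ_z(u)) = σ_{τ_x(z)}(τ_y(u)); σ_{τ_x(y)}(τ_z(u)) = τ_{σ_x(z)}(σ_y(u)). -/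
/-- Every 2-permutational solution is entropic. -/
theorem stmt_3 {X : Type*} (σ τ : X → Equiv.Perm X)
    (hsol : IsSolution σ τ) (hper : Is2Permutational σ τ) :
    ∀ x y z u : X,
      σ (σ x y) (σ z u) = σ (σ x z) (σ y u) ∧
      τ (τ x y) (τ z u) = τ (τ x z) (τ y u) ∧
      τ (σ x y) (σ z u) = σ (τ x z) (τ y u) ∧
      σ (τ x y) (τ z u) = τ (σ x z) (σ y u) := by
  obtain ⟨hB1, hB2, hB3⟩ := hsol
  obtain ⟨h1, h2, h3, h4⟩ := hper
  -- L1 : σ (σ c (τ b w)) = σ w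
  have L1 : ∀ c b w : X, σ (σ c (τ b w)) = σ w := by
    intro c b w
    have h := hB1 w (τ b w)
    rw [h3 (τ b w) b w] at h
    have h' : σ (σ w (τ b w)) = σ w := (mul_right_cancel h).symm
    rw [h1 c w (τ b w), h']
  -- L2 : τ (τ c (σ b w)) = τ w
  have L2 : ∀ c b w : X, τ (τ c (σ b w)) = τ w := by
    intro c b w
    have h := hB2 w (σ b w)
    rw [h4 (σ b w) b w] at h
    have h' : τ (τ w (σ b w)) = τ w := (mul_right_cancel h).symm
    rw [h2 c w (σ b w), h']
  -- L1' : σ (τ c (σ x y)) = σ y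
  have L1' : ∀ c x y : X, σ (τ c (σ x y)) = σ y := by
    intro c x y
    have e1 : σ (τ c (σ x y)) = σ (τ (σ (τ y x) y) (σ x y)) :=
      h3 c (σ (τ y x) y) (σ x y)
    rw [hB3 x y y] at e1
    rw [e1, L1 (τ (σ y y) x) y y]
  -- L2' : τ (σ c (τ x y)) = τ y
  have L2' : ∀ c x y : X, τ (σ c (τ x y)) = τ y := by
    intro c x y
    have e1 : τ (σ c (τ x y)) = τ (σ (τ (σ y x) y) (τ x y)) :=
      h4 c (τ (σ y x) y) (τ x y)
    rw [← hB3 y y x] at e1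
    rw [e1, L2 (σ (τ y y) x) y y]
  intro x y z u
  refine ⟨?_, ?_, ?_, ?_⟩
  · -- σ entropic
    have h := hB1 (σ x z) y
    rw [h1 (σ x z) x y, L1' y x z] at h
    have := DFunLike.congr_fun h u
    simpa [Equiv.Perm.mul_apply] using this.symm
  · -- τ entropic
    have h := hB2 (τ x z) y
    rw [h2 (τ x z) x y, L2' y x z] at h
    have := DFunLike.congr_fun h u
    simpa [Equiv.Perm.mul_apply] using this.symm
  · -- mixed 1
    have e := hB3 z u y
    rw [h4 (τ u z) x y, h3 (σ u y) x z] at e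
    exact e
  · -- mixed 2
    have e := hB3 y u z
    rw [h4 (τ u y) x z, h3 (σ u z) x y] at e
    exact e.symm
end

section
/- Let (X, σ, τ) be a 2-permutational solution. Then for all x, y, a, b ∈ X: (1) σ_a∘σ_y⁻¹∘σ_x = σ_x∘σ_y⁻¹∘σ_a; (2) τ_a∘τ_y⁻¹∘τ_x = τ_x∘τ_y⁻¹∘τ_a; (3) σ_a∘σ_y⁻¹∘τ_b∘τ_y⁻¹ = τ_b∘τ_y⁻¹∘σ_a∘σ_y⁻¹. -/
private lemma aux1 {G : Type*} [Group G] {a c : G} (h : c * a * c⁻¹ = a) : Commute a c := by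
  have h2 : c * a = a * c := by
    calc c * a = c * a * c⁻¹ * c := by group
      _ = a * c := by rw [h]
  exact h2.symm

private lemma aux2 {G : Type*} [Group G] (c : G) {a b : G} (h : Commute a b) :
    Commute (c * a * c⁻¹) (c * b * c⁻¹) := by
  have hh : (c * a * c⁻¹) * (c * b * c⁻¹) = (c * b * c⁻¹) * (c * a * c⁻¹) := by
    calc (c * a * c⁻¹) * (c * b * c⁻¹) = c * (a * b) * c⁻¹ := by group
      _ = c * (b * a) * c⁻¹ := by rw [h.eq]
      _ = (c * b * c⁻¹) * (c * a * c⁻¹) := by group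
  exact hh

theorem stmt_4 {X : Type*} (σ τ : X → Equiv.Perm X)
    (hsol : IsSolution σ τ) (hper : Is2Permutational σ τ) :
    ∀ x y a b : X,
      (σ a * (σ y)⁻¹ * σ x = σ x * (σ y)⁻¹ * σ a) ∧
      (τ a * (τ y)⁻¹ * τ x = τ x * (τ y)⁻¹ * τ a) ∧
      (σ a * (σ y)⁻¹ * (τ b * (τ y)⁻¹) = τ b * (τ y)⁻¹ * (σ a * (σ y)⁻¹)) := by
  obtain ⟨hB1, hB2, hB3⟩ := hsol
  obtain ⟨hp1, hp2, hp3, hp4⟩ := hper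
  -- (R1) σ p σ q = σ (σ_q q) σ (τ_p p)
  have R1 : ∀ p q : X, σ p * σ q = σ (σ q q) * σ (τ p p) := by
    intro p q; rw [hB1 p q, hp1 p q q, hp3 q p p]
  -- (R2) τ p τ q = τ (τ_q q) τ (σ_p p)
  have R2 : ∀ p q : X, τ p * τ q = τ (τ q q) * τ (σ p p) := by
    intro p q; rw [hB2 p q, hp2 p q q, hp4 q p p]
  -- (R3) τ (σ_z z) ∘ σ p = σ (τ_p p) ∘ τ z
  have R3 : ∀ p z : X, τ (σ z z) * σ p = σ (τ p p) * τ z := by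
    intro p z
    ext w
    have h := hB3 p w z
    rw [hp4 (τ w p) z z] at h
    rw [hp3 (σ w z) p p] at h
    simpa using h
  -- collapse identities
  have col1 : ∀ p : X, σ p = σ (σ (τ p p) (τ p p)) := by
    intro p; exact mul_right_cancel (R1 p (τ p p))
  have col2 : ∀ p : X, τ p = τ (τ (σ p p) (σ p p)) := by
    intro p; exact mul_right_cancel (R2 p (σ p p))
  -- (S2') left σ-quotients are right quotients of f-points
  have S2' : ∀ p q : X, (σ q)⁻¹ * σ p = σ (τ p p) * (σ (τ q q))⁻¹ := by
    intro p q
    have h : σ p * σ (τ q q) = σ q * σ (τ p p) := by rw [R1 p (τ q q), ← col1 q]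
    calc (σ q)⁻¹ * σ p = (σ q)⁻¹ * (σ p * σ (τ q q)) * (σ (τ q q))⁻¹ := by group
      _ = (σ q)⁻¹ * (σ q * σ (τ p p)) * (σ (τ q q))⁻¹ := by rw [h]
      _ = σ (τ p p) * (σ (τ q q))⁻¹ := by group
  have S1' : ∀ p q : X, (τ q)⁻¹ * τ p = τ (σ p p) * (τ (σ q q))⁻¹ := by
    intro p q
    have h : τ p * τ (σ q q) = τ q * τ (σ p p) := by rw [R2 p (σ q q), ← col2 q]
    calc (τ q)⁻¹ * τ p = (τ q)⁻¹ * (τ p * τ (σ q q)) * (τ (σ q q))⁻¹ := by group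
      _ = (τ q)⁻¹ * (τ q * τ (σ p p)) * (τ (σ q q))⁻¹ := by rw [h]
      _ = τ (σ p p) * (τ (σ q q))⁻¹ := by group
  -- conjugation identities
  have c1 : ∀ p q z : X,
      τ (σ z z) * (σ p * (σ q)⁻¹) * (τ (σ z z))⁻¹ = (σ q)⁻¹ * σ p := by
    intro p q z
    calc τ (σ z z) * (σ p * (σ q)⁻¹) * (τ (σ z z))⁻¹
        = (τ (σ z z) * σ p) * (τ (σ z z) * σ q)⁻¹ := by group
      _ = (σ (τ p p) * τ z) * (σ (τ q q) * τ z)⁻¹ := by rw [R3 p z, R3 q z]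
      _ = σ (τ p p) * (σ (τ q q))⁻¹ := by group
      _ = (σ q)⁻¹ * σ p := (S2' p q).symm
  have c2 : ∀ p q u : X,
      σ (τ u u) * (τ p * (τ q)⁻¹) * (σ (τ u u))⁻¹ = (τ q)⁻¹ * τ p := by
    intro p q u
    calc σ (τ u u) * (τ p * (τ q)⁻¹) * (σ (τ u u))⁻¹
        = (σ (τ u u) * τ p) * (σ (τ u u) * τ q)⁻¹ := by group
      _ = (τ (σ p p) * σ u) * (τ (σ q q) * σ u)⁻¹ := by rw [← R3 u p, ← R3 u q]
      _ = τ (σ p p) * (τ (σ q q))⁻¹ := by group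
      _ = (τ q)⁻¹ * τ p := (S1' p q).symm
  have c3 : ∀ p q z : X,
      τ z * ((σ q)⁻¹ * σ p) * (τ z)⁻¹ = (σ (τ q q))⁻¹ * σ (τ p p) := by
    intro p q z
    calc τ z * ((σ q)⁻¹ * σ p) * (τ z)⁻¹
        = (σ (τ q q))⁻¹ * ((σ (τ q q) * τ z) * ((σ q)⁻¹ * σ p) * (σ (τ p p) * τ z)⁻¹) *
            σ (τ p p) := by group
      _ = (σ (τ q q))⁻¹ * ((τ (σ z z) * σ q) * ((σ q)⁻¹ * σ p) * (τ (σ z z) * σ p)⁻¹) *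
            σ (τ p p) := by rw [← R3 q z, ← R3 p z]
      _ = (σ (τ q q))⁻¹ * σ (τ p p) := by group
  have c3' : ∀ p q z : X,
      σ z * ((τ q)⁻¹ * τ p) * (σ z)⁻¹ = (τ (σ q q))⁻¹ * τ (σ p p) := by
    intro p q z
    calc σ z * ((τ q)⁻¹ * τ p) * (σ z)⁻¹
        = (τ (σ q q))⁻¹ * ((τ (σ q q) * σ z) * ((τ q)⁻¹ * τ p) * (τ (σ p p) * σ z)⁻¹) *
            τ (σ p p) := by group
      _ = (τ (σ q q))⁻¹ * ((σ (τ z z) * τ q) * ((τ q)⁻¹ * τ p) * (σ (τ z z) * τ p)⁻¹) *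
            τ (σ p p) := by rw [R3 z q, R3 z p]
      _ = (τ (σ q q))⁻¹ * τ (σ p p) := by group
  have c4 : ∀ p q z : X,
      τ z * (τ p * (τ q)⁻¹) * (τ z)⁻¹ = τ (τ p p) * (τ (τ q q))⁻¹ := by
    intro p q z
    calc τ z * (τ p * (τ q)⁻¹) * (τ z)⁻¹ = (τ z * τ p) * (τ z * τ q)⁻¹ := by group
      _ = (τ (τ p p) * τ (σ z z)) * (τ (τ q q) * τ (σ z z))⁻¹ := by rw [R2 z p, R2 z q]
      _ = τ (τ p p) * (τ (τ q q))⁻¹ := by group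
  have c5 : ∀ p q u : X,
      (σ u)⁻¹ * ((σ q)⁻¹ * σ p) * σ u = (σ (τ q q))⁻¹ * σ (τ p p) := by
    intro p q u
    calc (σ u)⁻¹ * ((σ q)⁻¹ * σ p) * σ u = (σ q * σ u)⁻¹ * (σ p * σ u) := by group
      _ = (σ (σ u u) * σ (τ q q))⁻¹ * (σ (σ u u) * σ (τ p p)) := by rw [R1 q u, R1 p u]
      _ = (σ (τ q q))⁻¹ * σ (τ p p) := by group
  have c5' : ∀ p q u : X,
      (τ u)⁻¹ * ((τ q)⁻¹ * τ p) * τ u = (τ (σ q q))⁻¹ * τ (σ p p) := by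
    intro p q u
    calc (τ u)⁻¹ * ((τ q)⁻¹ * τ p) * τ u = (τ q * τ u)⁻¹ * (τ p * τ u) := by group
      _ = (τ (τ u u) * τ (σ q q))⁻¹ * (τ (τ u u) * τ (σ p p)) := by rw [R2 q u, R2 p u]
      _ = (τ (σ q q))⁻¹ * τ (σ p p) := by group
  -- left σ-quotients commute with (σ u * τ z)
  have Kst : ∀ p q u z : X, Commute ((σ q)⁻¹ * σ p) (σ u * τ z) := by
    intro p q u z
    apply aux1
    calc (σ u * τ z) * ((σ q)⁻¹ * σ p) * (σ u * τ z)⁻¹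
        = σ u * (τ z * ((σ q)⁻¹ * σ p) * (τ z)⁻¹) * (σ u)⁻¹ := by group
      _ = σ u * ((σ (τ q q))⁻¹ * σ (τ p p)) * (σ u)⁻¹ := by rw [c3 p q z]
      _ = σ u * ((σ u)⁻¹ * ((σ q)⁻¹ * σ p) * σ u) * (σ u)⁻¹ := by rw [← c5 p q u]
      _ = (σ q)⁻¹ * σ p := by group
  have Kts : ∀ p q u z : X, Commute ((τ q)⁻¹ * τ p) (τ u * σ z) := by
    intro p q u z
    apply aux1
    calc (τ u * σ z) * ((τ q)⁻¹ * τ p) * (τ u * σ z)⁻¹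
        = τ u * (σ z * ((τ q)⁻¹ * τ p) * (σ z)⁻¹) * (τ u)⁻¹ := by group
      _ = τ u * ((τ (σ q q))⁻¹ * τ (σ p p)) * (τ u)⁻¹ := by rw [c3' p q z]
      _ = τ u * ((τ u)⁻¹ * ((τ q)⁻¹ * τ p) * τ u) * (τ u)⁻¹ := by rw [← c5' p q u]
      _ = (τ q)⁻¹ * τ p := by group
  -- left σ-quotients commute with right σ-quotients
  have LR : ∀ p q w w' : X, Commute ((σ q)⁻¹ * σ p) (σ w * (σ w')⁻¹) := by
    intro p q w w'
    have h := (Kst p q w q).mul_right (Kst p q w' q).inv_right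
    rwa [show (σ w * τ q) * (σ w' * τ q)⁻¹ = σ w * (σ w')⁻¹ from by group] at h
  have LL : ∀ p q p' q' : X, Commute ((σ q)⁻¹ * σ p) ((σ q')⁻¹ * σ p') := by
    intro p q p' q'
    have h := LR p q (τ p' p') (τ q' q')
    rwa [← S2' p' q'] at h
  have LR' : ∀ p q w w' : X, Commute ((τ q)⁻¹ * τ p) (τ w * (τ w')⁻¹) := by
    intro p q w w'
    have h := (Kts p q w q).mul_right (Kts p q w' q).inv_right
    rwa [show (τ w * σ q) * (τ w' * σ q)⁻¹ = τ w * (τ w')⁻¹ from by group] at h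
  have LL' : ∀ p q p' q' : X, Commute ((τ q)⁻¹ * τ p) ((τ q')⁻¹ * τ p') := by
    intro p q p' q'
    have h := LR' p q (σ p' p') (σ q' q')
    rwa [← S1' p' q'] at h
  -- f-point left σ-quotients commute with all right τ-quotients
  have StepD : ∀ p q r w : X, Commute ((σ (τ q q))⁻¹ * σ (τ p p)) (τ r * (τ w)⁻¹) := by
    intro p q r w
    have h1 := (Kst p q q r).mul_right (Kst p q q w).inv_right
    rw [show (σ q * τ r) * (σ q * τ w)⁻¹ = σ q * (τ r * (τ w)⁻¹) * (σ q)⁻¹ from by group] at h1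
    have h2 := aux2 ((σ q)⁻¹) h1
    rwa [show (σ q)⁻¹ * ((σ q)⁻¹ * σ p) * ((σ q)⁻¹)⁻¹ = (σ (τ q q))⁻¹ * σ (τ p p) from by
          rw [inv_inv]; exact c5 p q q,
        show (σ q)⁻¹ * (σ q * (τ r * (τ w)⁻¹) * (σ q)⁻¹) * ((σ q)⁻¹)⁻¹ = τ r * (τ w)⁻¹ from by
          group] at h2
  -- all left σ-quotients commute with all right τ-quotients
  have StepE : ∀ p q r w : X, Commute ((σ q)⁻¹ * σ p) (τ r * (τ w)⁻¹) := by
    intro p q r w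
    have hD := StepD p q (τ r r) (τ w w)
    have h2 := aux2 ((τ q)⁻¹) hD
    rwa [show (τ q)⁻¹ * ((σ (τ q q))⁻¹ * σ (τ p p)) * ((τ q)⁻¹)⁻¹ = (σ q)⁻¹ * σ p from by
          rw [inv_inv, ← c3 p q q]; group,
        show (τ q)⁻¹ * (τ (τ r r) * (τ (τ w w))⁻¹) * ((τ q)⁻¹)⁻¹ = τ r * (τ w)⁻¹ from by
          rw [inv_inv, ← c4 r w q]; group] at h2
  intro x y a b
  refine ⟨?_, ?_, ?_⟩
  · -- (1)
    have hC := LL a y x y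
    have h2 := aux2 ((τ (σ y y))⁻¹) hC
    rw [show (τ (σ y y))⁻¹ * ((σ y)⁻¹ * σ a) * ((τ (σ y y))⁻¹)⁻¹ = σ a * (σ y)⁻¹ from by
          rw [inv_inv, ← c1 a y y]; group,
        show (τ (σ y y))⁻¹ * ((σ y)⁻¹ * σ x) * ((τ (σ y y))⁻¹)⁻¹ = σ x * (σ y)⁻¹ from by
          rw [inv_inv, ← c1 x y y]; group] at h2
    calc σ a * (σ y)⁻¹ * σ x = (σ a * (σ y)⁻¹) * (σ x * (σ y)⁻¹) * σ y := by group
      _ = (σ x * (σ y)⁻¹) * (σ a * (σ y)⁻¹) * σ y := by rw [h2.eq]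
      _ = σ x * (σ y)⁻¹ * σ a := by group
  · -- (2)
    have hC := LL' a y x y
    have h2 := aux2 ((σ (τ y y))⁻¹) hC
    rw [show (σ (τ y y))⁻¹ * ((τ y)⁻¹ * τ a) * ((σ (τ y y))⁻¹)⁻¹ = τ a * (τ y)⁻¹ from by
          rw [inv_inv, ← c2 a y y]; group,
        show (σ (τ y y))⁻¹ * ((τ y)⁻¹ * τ x) * ((σ (τ y y))⁻¹)⁻¹ = τ x * (τ y)⁻¹ from by
          rw [inv_inv, ← c2 x y y]; group] at h2
    calc τ a * (τ y)⁻¹ * τ x = (τ a * (τ y)⁻¹) * (τ x * (τ y)⁻¹) * τ y := by group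
      _ = (τ x * (τ y)⁻¹) * (τ a * (τ y)⁻¹) * τ y := by rw [h2.eq]
      _ = τ x * (τ y)⁻¹ * τ a := by group
  · -- (3)
    have hE := StepE a y (τ b b) (τ y y)
    have h2 := aux2 ((τ (σ y y))⁻¹) hE
    rw [show (τ (σ y y))⁻¹ * ((σ y)⁻¹ * σ a) * ((τ (σ y y))⁻¹)⁻¹ = σ a * (σ y)⁻¹ from by
          rw [inv_inv, ← c1 a y y]; group,
        show (τ (σ y y))⁻¹ * (τ (τ b b) * (τ (τ y y))⁻¹) * ((τ (σ y y))⁻¹)⁻¹ = τ b * (τ y)⁻¹ from by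
          rw [inv_inv, ← c4 b y (σ y y)]; group] at h2
    exact h2.eq
end

section
/- The displacement group of a 2-permutational solution is abelian; that is, the subgroup of Sym(X) × Sym(X) generated by the pairs (σ_x∘σ_y⁻¹, τ_x⁻¹∘τ_y), for x, y ∈ X, is commutative. -/
/-- The displacement group of a solution: the subgroup of Sym(X) × Sym(X)
generated by the pairs (σ_x ∘ σ_y⁻¹, τ_x⁻¹ ∘ τ_y). -/
def DisplacementGroup {X : Type*} (σ τ : X → Equiv.Perm X) :
    Subgroup (Equiv.Perm X × Equiv.Perm X) :=
  Subgroup.closure {q | ∃ x y : X, q = (σ x * (σ y)⁻¹, (τ x)⁻¹ * τ y)}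

section Aux

variable {M : Type*} [Group M] {X : Type*}

lemma conj_commute {a x y : M} (h : Commute x y) :
    Commute (a * x * a⁻¹) (a * y * a⁻¹) := by
  show (a * x * a⁻¹) * (a * y * a⁻¹) = (a * y * a⁻¹) * (a * x * a⁻¹)
  calc (a * x * a⁻¹) * (a * y * a⁻¹) = a * (x * y) * a⁻¹ := by group
    _ = a * (y * x) * a⁻¹ := by rw [h.eq]
    _ = (a * y * a⁻¹) * (a * x * a⁻¹) := by group

/-- Abstract lemma, mul-inv version. -/
lemma lemA (s f g : X → M) (key : ∀ x y, s x * s y = f y * g x)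
    (hf : ∀ y, ∃ y', f y = s y') :
    ∀ a b c d, Commute (s a * (s b)⁻¹) (s c * (s d)⁻¹) := by
  have hs : ∀ x y, s x = f y * g x * (s y)⁻¹ := fun x y => by
    rw [eq_mul_inv_iff_mul_eq]; exact key x y
  have hf' : ∀ y x, f y = s x * s y * (g x)⁻¹ := fun y x => by
    rw [eq_mul_inv_iff_mul_eq]; exact (key x y).symm
  have h1 : ∀ c d y, s c * (s d)⁻¹ = f y * (g c * (g d)⁻¹) * (f y)⁻¹ := fun c d y => by
    rw [hs c y, hs d y]; group
  have R : ∀ a b c d, Commute (f a * (f b)⁻¹) (s c * (s d)⁻¹) := by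
    intro a b c d
    have hab : f a * (g c * (g d)⁻¹) * (f a)⁻¹ = f b * (g c * (g d)⁻¹) * (f b)⁻¹ :=
      (h1 c d a).symm.trans (h1 c d b)
    show (f a * (f b)⁻¹) * (s c * (s d)⁻¹) = (s c * (s d)⁻¹) * (f a * (f b)⁻¹)
    calc (f a * (f b)⁻¹) * (s c * (s d)⁻¹)
        = f a * (f b)⁻¹ * (f b * (g c * (g d)⁻¹) * (f b)⁻¹) := by rw [← h1 c d b]
      _ = f a * (g c * (g d)⁻¹) * (f a)⁻¹ * (f a * (f b)⁻¹) := by group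
      _ = f b * (g c * (g d)⁻¹) * (f b)⁻¹ * (f a * (f b)⁻¹) := by rw [hab]
      _ = (s c * (s d)⁻¹) * (f a * (f b)⁻¹) := by rw [← h1 c d b]
  have h3 : ∀ a b x, f a * (f b)⁻¹ = s x * (s a * (s b)⁻¹) * (s x)⁻¹ := fun a b x => by
    rw [hf' a x, hf' b x]; group
  intro a b c d
  obtain ⟨c', hc'⟩ := hf c
  obtain ⟨d', hd'⟩ := hf d
  have e1 : s a * (s b)⁻¹ = (s a)⁻¹ * (f a * (f b)⁻¹) * ((s a)⁻¹)⁻¹ := by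
    rw [h3 a b a]; group
  have e2 : s c * (s d)⁻¹ = (s a)⁻¹ * (f c * (f d)⁻¹) * ((s a)⁻¹)⁻¹ := by
    rw [h3 c d a]; group
  rw [e1, e2]
  refine conj_commute ?_
  rw [hc', hd']
  exact R a b c' d'

/-- Abstract lemma, inv-mul version. -/
lemma lemB (s f g : X → M) (key : ∀ x y, s x * s y = f y * g x)
    (hg : ∀ y, ∃ y', g y = s y') :
    ∀ a b c d, Commute ((s a)⁻¹ * s b) ((s c)⁻¹ * s d) := by
  have hs : ∀ x y, s x = f y * g x * (s y)⁻¹ := fun x y => by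
    rw [eq_mul_inv_iff_mul_eq]; exact key x y
  have h1 : ∀ c d y, (s c)⁻¹ * s d = s y * ((g c)⁻¹ * g d) * (s y)⁻¹ := fun c d y => by
    rw [hs c y, hs d y]; group
  have R : ∀ a b c d, Commute ((s b)⁻¹ * s a) ((g c)⁻¹ * g d) := by
    intro a b c d
    have hab : s a * ((g c)⁻¹ * g d) * (s a)⁻¹ = s b * ((g c)⁻¹ * g d) * (s b)⁻¹ :=
      (h1 c d a).symm.trans (h1 c d b)
    show ((s b)⁻¹ * s a) * ((g c)⁻¹ * g d) = ((g c)⁻¹ * g d) * ((s b)⁻¹ * s a)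
    calc ((s b)⁻¹ * s a) * ((g c)⁻¹ * g d)
        = (s b)⁻¹ * (s a * ((g c)⁻¹ * g d) * (s a)⁻¹) * s a := by group
      _ = (s b)⁻¹ * (s b * ((g c)⁻¹ * g d) * (s b)⁻¹) * s a := by rw [hab]
      _ = ((g c)⁻¹ * g d) * ((s b)⁻¹ * (s b * (s b)⁻¹) * s a) := by group
      _ = ((g c)⁻¹ * g d) * ((s b)⁻¹ * s a) := by group
  intro a b c d
  obtain ⟨c', hc'⟩ := hg c
  obtain ⟨d', hd'⟩ := hg d
  have e1 : (s a)⁻¹ * s b = s a * ((g a)⁻¹ * g b) * (s a)⁻¹ := h1 a b a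
  have e2 : (s c)⁻¹ * s d = s a * ((g c)⁻¹ * g d) * (s a)⁻¹ := h1 c d a
  rw [e1, e2]
  refine conj_commute ?_
  have : Commute ((s c')⁻¹ * s d') ((g a)⁻¹ * g b) := R d' c' a b
  rw [hc', hd']
  exact this.symm

end Aux

/-- The displacement group of a 2-permutational solution is abelian. -/
theorem stmt_5 {X : Type*} (σ τ : X → Equiv.Perm X)
    (hsol : IsSolution σ τ) (hper : Is2Permutational σ τ) :
    ∀ p ∈ DisplacementGroup σ τ, ∀ q ∈ DisplacementGroup σ τ, p * q = q * p := by
  by_cases hX : Nonempty X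
  · obtain ⟨e⟩ := hX
    have keyσ : ∀ x y, σ x * σ y = σ (σ e y) * σ (τ e x) := fun x y => by
      rw [hsol.1 x y, hper.1 x e y, hper.2.2.1 y e x]
    have keyτ : ∀ x y, τ x * τ y = τ (τ e y) * τ (σ e x) := fun x y => by
      rw [hsol.2.1 x y, hper.2.1 x e y, hper.2.2.2 y e x]
    have hA := lemA σ (fun y => σ (σ e y)) (fun x => σ (τ e x)) keyσ (fun y => ⟨σ e y, rfl⟩)
    have hB := lemB τ (fun y => τ (τ e y)) (fun x => τ (σ e x)) keyτ (fun y => ⟨σ e y, rfl⟩)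
    intro p hp q hq
    rw [DisplacementGroup] at hp hq
    induction hp, hq using Subgroup.closure_induction₂ with
    | mem x y hx hy =>
      obtain ⟨a, b, rfl⟩ := hx
      obtain ⟨c, d, rfl⟩ := hy
      exact Prod.ext (hA a b c d) (hB a b c d)
    | one_left x hx => simp
    | one_right x hx => simp
    | mul_left x y z hx hy hz h1 h2 =>
      exact (Commute.mul_left h1 h2 : Commute _ _)
    | mul_right y z x hy hz hx h1 h2 =>
      exact (Commute.mul_right h1 h2 : Commute _ _)
    | inv_left x y hx hy h => exact (Commute.inv_left h : Commute _ _)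
    | inv_right x y hx hy h => exact (Commute.inv_right h : Commute _ _)
  · intro p hp q hq
    have hS : {q : Equiv.Perm X × Equiv.Perm X | ∃ x y : X, q = (σ x * (σ y)⁻¹, (τ x)⁻¹ * τ y)} = ∅ := by
      ext w; simp only [Set.mem_setOf_eq, Set.mem_empty_iff_false, iff_false]
      rintro ⟨x, -⟩; exact hX ⟨x⟩
    rw [DisplacementGroup, hS, Subgroup.closure_empty, Subgroup.mem_bot] at hp hq
    rw [hp, hq]
end

section
/- Let (X, σ, τ) be a 2-permutational solution and let σ̂_x, τ̂_x : X → X (x ∈ X) be families of permutations such that for all x, y ∈ X: σ_{σ̂_x(y)}(τ̂_y(x)) = x, τ_{τ̂_y(x)}(σ̂_x(y)) = y, σ̂_{σ_x(y)}(τ_y(x)) = x and τ̂_{τ_y(x)}(σ_x(y)) = y (i.e., the map (x,y) ↦ (σ̂_x(y), τ̂_y(x)) is a two-sided inverse of (x,y) ↦ (σ_x(y), τ_y(x)) on X × X). Then (σ̂, τ̂) satisfies the 2-permutational identities: for all x, y, z ∈ X, σ̂_{σ̂_x(z)} = σ̂_{σ̂_y(z)}, τ̂_{τ̂_x(z)}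 = τ̂_{τ̂_y(z)}, σ̂_{τ̂_x(z)} = σ̂_{τ̂_y(z)} and τ̂_{σ̂_x(z)} = τ̂_{σ̂_y(z)}. -/
/-- The inverse solution of a bijective 2-permutational solution satisfies
the 2-permutational identities. -/
theorem stmt_6 {X : Type*} (σ τ σh τh : X → Equiv.Perm X)
    (hsol : IsSolution σ τ) (hper : Is2Permutational σ τ)
    (h1 : ∀ x y : X, σ (σh x y) (τh y x) = x)
    (h2 : ∀ x y : X, τ (τh y x) (σh x y) = y)
    (h3 : ∀ x y : X, σh (σ x y) (τ y x) = x)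
    (h4 : ∀ x y : X, τh (τ y x) (σ x y) = y) :
    (∀ x y z : X, σh (σh x z) = σh (σh y z)) ∧
    (∀ x y z : X, τh (τh x z) = τh (τh y z)) ∧
    (∀ x y z : X, σh (τh x z) = σh (τh y z)) ∧
    (∀ x y z : X, τh (σh x z) = τh (σh y z)) := by
  obtain ⟨B1, B2, B3⟩ := hsol
  obtain ⟨P1, P2, P3, P4⟩ := hper
  -- Lemma A : equal under some τ's implies same σ and τ
  have lemA : ∀ a a' b b' : X, τ b a = τ b' a' → σ a = σ a' ∧ τ a = τ a' := by
    intro a a' b b' h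
    constructor
    · have e1 : σ a * σ a = σ (σ a' a) * σ (τ b a) := by
        rw [B1 a a, P1 a a' a, P3 a b a]
      have e2 : σ a' * σ a = σ (σ a' a) * σ (τ b a) := by
        rw [B1 a' a, P3 a b' a', h]
      exact mul_right_cancel (e1.trans e2.symm)
    · have e1 : τ a * τ a = τ (τ b a) * τ (σ a' a) := by
        rw [B2 a a, P2 a b a, P4 a a' a]
      have e2 : τ a * τ a' = τ (τ b a) * τ (σ a' a) := by
        rw [B2 a a', P2 a b' a', h]
      exact mul_left_cancel (e1.trans e2.symm)
  -- Lemma B : equal under some σ's implies same σ and τ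
  have lemB : ∀ a a' c c' : X, σ c a = σ c' a' → σ a = σ a' ∧ τ a = τ a' := by
    intro a a' c c' h
    constructor
    · have e1 : σ a * σ a = σ (σ c a) * σ (τ a' a) := by
        rw [B1 a a, P1 a c a, P3 a a' a]
      have e2 : σ a * σ a' = σ (σ c a) * σ (τ a' a) := by
        rw [B1 a a', P1 a c' a', h]
      exact mul_left_cancel (e1.trans e2.symm)
    · have e1 : τ a * τ a = τ (τ a' a) * τ (σ c a) := by
        rw [B2 a a, P2 a a' a, P4 a c a]
      have e2 : τ a' * τ a = τ (τ a' a) * τ (σ c a) := by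
        rw [B2 a' a, P4 a c' a', h]
      exact mul_right_cancel (e1.trans e2.symm)
  -- Claim C : τ a = τ a' implies σh a = σh a'
  have claimC : ∀ a a' : X, τ a = τ a' → σh a = σh a' := by
    intro a a' h
    ext w
    set p := σh a w with hp
    set q := τh w a with hq
    have hpq1 : σ p q = a := h1 a w
    have hpq2 : τ q p = w := h2 a w
    set v := (σ p).symm a' with hv
    have hv1 : σ p v = a' := (σ p).apply_symm_apply a'
    have hqv : τ q = τ v := by
      have e1 : τ q * τ q = τ (τ v q) * τ a := by
        rw [B2 q q, P2 q v q, P4 q p q, hpq1]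
      have e2 : τ v * τ q = τ (τ v q) * τ a := by
        rw [B2 v q, P4 q p v, hv1, h]
      exact mul_right_cancel (e1.trans e2.symm)
    have : σh a' w = p := by
      have := h3 p v
      rwa [hv1, show τ v p = w by rw [← hqv]; exact hpq2] at this
    simpa using this.symm
  -- Claim D : σ a = σ a' implies τh a = τh a'
  have claimD : ∀ a a' : X, σ a = σ a' → τh a = τh a' := by
    intro a a' h
    ext w
    set q := τh a w with hqq
    set p := σh w a with hpp
    have hpq1 : σ p q = w := h1 w a
    have hpq2 : τ q p = a := h2 w a
    set u := (τ q).symm a' with hu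
    have hu1 : τ q u = a' := (τ q).apply_symm_apply a'
    have hpu : σ p = σ u := by
      have e1 : σ p * σ p = σ (σ u p) * σ a := by
        rw [B1 p p, P1 p u p, P3 p q p, hpq2]
      have e2 : σ u * σ p = σ (σ u p) * σ a := by
        rw [B1 u p, P3 p q u, hu1, h]
      exact mul_right_cancel (e1.trans e2.symm)
    have : τh a' w = q := by
      have := h4 u q
      rwa [hu1, show σ u q = w by rw [← hpu, hpq1]] at this
    simpa using this.symm
  refine ⟨?_, ?_, ?_, ?_⟩
  · intro x y z
    have ha : τ (τh z x) (σh x z) = z := h2 x z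
    have hb : τ (τh z y) (σh y z) = z := h2 y z
    exact claimC _ _ (lemA _ _ _ _ (ha.trans hb.symm)).2
  · intro x y z
    have ha : σ (σh z x) (τh x z) = z := h1 z x
    have hb : σ (σh z y) (τh y z) = z := h1 z y
    exact claimD _ _ (lemB _ _ _ _ (ha.trans hb.symm)).1
  · intro x y z
    have ha : σ (σh z x) (τh x z) = z := h1 z x
    have hb : σ (σh z y) (τh y z) = z := h1 z y
    exact claimC _ _ (lemB _ _ _ _ (ha.trans hb.symm)).2
  · intro x y z
    have ha : τ (τh z x) (σh x z) = z := h2 x z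
    have hb : τ (τh z y) (σh y z) = z := h2 y z
    exact claimD _ _ (lemA _ _ _ _ (ha.trans hb.symm)).1
end

section
/- Let (X, σ, τ) be a 2-permutational involutive solution, and define U, T : X → X by U(x) = σ_x⁻¹(x) and T(x) = τ_x⁻¹(x). Then the (U,T)-isotope is involutive; more precisely, σ_x∘U∘τ_x∘T = id_X for every x ∈ X, i.e., the isotope maps L_x = σ_x∘U and R_x = τ_x∘T satisfy R_x = L_x⁻¹ for all x ∈ X. -/
/-- For a 2-permutational involutive solution, the (U,T)-isotope is involutive:
σ_x ∘ U ∘ τ_x ∘ T = id for every x. -/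
theorem stmt_7 {X : Type*} (σ τ : X → Equiv.Perm X)
    (hsol : IsSolution σ τ) (hper : Is2Permutational σ τ)
    (hinv : IsInvolutive σ τ)
    (U T : X → X)
    (hU : ∀ x : X, U x = (σ x)⁻¹ x) (hT : ∀ x : X, T x = (τ x)⁻¹ x) :
    ∀ x : X, ⇑(σ x) ∘ U ∘ ⇑(τ x) ∘ T = id := by

  obtain ⟨hB1, hB2, hB3⟩ := hsol
  obtain ⟨hp1, hp2, hp3, hp4⟩ := hper
  obtain ⟨hi1, hi2⟩ := hinv
  have L1 : ∀ z : X, σ z (U z) = z := by intro z; rw [hU]; simp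
  have L2 : ∀ z : X, τ z (T z) = z := by intro z; rw [hT]; simp
  have L3 : ∀ z : X, τ (U z) z = U z := by
    intro z
    have h := hi1 z (U z)
    rw [L1] at h
    exact (σ z).injective (h.trans (L1 z).symm)
  have L4 : ∀ x y : X, τ (τ y x) = τ (U x) := by
    intro x y
    have h := hp2 y (U x) x
    rwa [L3] at h
  have L5 : ∀ x y : X, τ (U x) (σ x y) = y := by
    intro x y
    have h := hi2 x y
    rwa [L4 x y] at h
  have L5' : ∀ x y : X, σ x (τ (U x) y) = y := by
    intro x y
    exact (τ (U x)).injective (L5 x (τ (U x) y))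
  have L6 : ∀ x z : X, σ (τ x (T z)) = σ z := by
    intro x z
    have h := hp3 x z (T z)
    rwa [L2] at h
  have L7 : ∀ x z w : X, τ (U z) (τ x w) = τ (U x) (τ z w) := by
    intro x z w
    have h := congrFun (congrArg (fun (f : Equiv.Perm X) => (f : X → X)) (hB2 (U z) x)) w
    simp only [Equiv.Perm.coe_mul, Function.comp_apply] at h
    rw [L4 x (U z), hp4 x z (U z), L1] at h
    exact h
  intro x
  funext z
  simp only [Function.comp_apply, id_eq]
  rw [hU (τ x (T z)), L6 x z]
  have h8 : (σ z)⁻¹ (τ x (T z)) = τ (U z) (τ x (T z)) :=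
    (σ z).injective (by rw [Equiv.Perm.inv_def, Equiv.apply_symm_apply, L5'])
  rw [h8, L7, L2, L5']
end

section
/- Let (X, L, R) be a 2-reductive solution and let π1, π2 be two commuting automorphisms of (X, L, R). Then the following conditions are equivalent: (i) for all x, y ∈ X, L_x∘π1∘L_y = L_{π1(y)}∘π1∘L_{π2(x)}, R_x∘π2∘R_y = R_{π2(y)}∘π2∘R_{π1(x)}, and R_{π1(y)}∘π2∘L_x∘π1 = L_{π2(x)}∘π1∘R_y∘π2; (ii) L_{π1(π2(x))} = L_x and R_{π1(π2(x))} = R_x for each x ∈ X; (iii) the map π1∘π2 commutes with every L_x and every R_x; (iv) for every automorphism φ of (X, L, R), the map φ⁻¹∘π1∘π2∘φ commutes with every L_x and every R_x. -/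
/-- Conditions (is1)--(is2) for a pair of bijections on a solution. -/
def IsoConds {X : Type*} (L R : X → Equiv.Perm X) (π1 π2 : Equiv.Perm X) : Prop :=
  (∀ x y : X, L x * π1 * L y = L (π1 y) * π1 * L (π2 x)) ∧
  (∀ x y : X, R x * π2 * R y = R (π2 y) * π2 * R (π1 x)) ∧
  (∀ x y : X, R (π1 y) * π2 * L x * π1 = L (π2 x) * π1 * R y * π2)

/-- For commuting automorphisms π1, π2 of a 2-reductive solution, the four
conditions of Lemma 4.7 are equivalent. -/
theorem stmt_8 {X : Type*} (L R : X → Equiv.Perm X)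
    (hsol : IsSolution L R) (hred : Is2Reductive L R)
    (π1 π2 : Equiv.Perm X)
    (hπ1 : IsAuto L R π1) (hπ2 : IsAuto L R π2)
    (hcomm : π1 * π2 = π2 * π1) :
    List.TFAE
      [IsoConds L R π1 π2,
       ∀ x : X, L (π1 (π2 x)) = L x ∧ R (π1 (π2 x)) = R x,
       ∀ x : X, Commute (π1 * π2) (L x) ∧ Commute (π1 * π2) (R x),
       ∀ φ : Equiv.Perm X, IsAuto L R φ →
         ∀ x : X, Commute (φ⁻¹ * (π1 * π2) * φ) (L x) ∧
           Commute (φ⁻¹ * (π1 * π2) * φ) (R x)] := by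
  -- left translations commute
  have hLL : ∀ x y : X, L x * L y = L y * L x := by
    intro x y
    have h := hsol.1 x y
    rw [hred.1, hred.2.2.1] at h
    exact h
  -- right translations commute
  have hRR : ∀ x y : X, R x * R y = R y * R x := by
    intro x y
    have h := hsol.2.1 x y
    rw [hred.2.1, hred.2.2.2] at h
    exact h
  -- left and right translations commute
  have hLR : ∀ x z : X, L x * R z = R z * L x := by
    intro x z
    ext y
    have h := hsol.2.2 x y z
    rw [hred.2.2.2, hred.2.2.1] at h
    simpa [Equiv.Perm.mul_apply] using h.symm
  -- generalized (right-associated) versions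
  have swL1 : ∀ (x : X) (w : Equiv.Perm X), π1 * (L x * w) = L (π1 x) * (π1 * w) := by
    intro x w; rw [← mul_assoc, hπ1.1, mul_assoc]
  have swL2 : ∀ (x : X) (w : Equiv.Perm X), π2 * (L x * w) = L (π2 x) * (π2 * w) := by
    intro x w; rw [← mul_assoc, hπ2.1, mul_assoc]
  have swR1 : ∀ (x : X) (w : Equiv.Perm X), π1 * (R x * w) = R (π1 x) * (π1 * w) := by
    intro x w; rw [← mul_assoc, hπ1.2, mul_assoc]
  have swR2 : ∀ (x : X) (w : Equiv.Perm X), π2 * (R x * w) = R (π2 x) * (π2 * w) := by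
    intro x w; rw [← mul_assoc, hπ2.2, mul_assoc]
  have cLL : ∀ (x y : X) (w : Equiv.Perm X), L x * (L y * w) = L y * (L x * w) := by
    intro x y w; rw [← mul_assoc, hLL, mul_assoc]
  have cRR : ∀ (x y : X) (w : Equiv.Perm X), R x * (R y * w) = R y * (R x * w) := by
    intro x y w; rw [← mul_assoc, hRR, mul_assoc]
  have cLR : ∀ (x y : X) (w : Equiv.Perm X), L x * (R y * w) = R y * (L x * w) := by
    intro x y w; rw [← mul_assoc, hLR, mul_assoc]
  -- pointwise commutation of π1 and π2
  have hc : ∀ x : X, π1 (π2 x) = π2 (π1 x) := by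
    intro x
    have := Equiv.ext_iff.mp hcomm x
    simpa [Equiv.Perm.mul_apply] using this
  -- π1 * π2 conjugates L and R as an automorphism
  have hAL : ∀ x : X, π1 * π2 * L x = L (π1 (π2 x)) * (π1 * π2) := by
    intro x
    calc π1 * π2 * L x = π1 * (L (π2 x) * π2) := by rw [mul_assoc, hπ2.1]
      _ = π1 * L (π2 x) * π2 := by rw [mul_assoc]
      _ = L (π1 (π2 x)) * (π1 * π2) := by rw [hπ1.1, mul_assoc]
  have hAR : ∀ x : X, π1 * π2 * R x = R (π1 (π2 x)) * (π1 * π2) := by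
    intro x
    calc π1 * π2 * R x = π1 * (R (π2 x) * π2) := by rw [mul_assoc, hπ2.2]
      _ = π1 * R (π2 x) * π2 := by rw [mul_assoc]
      _ = R (π1 (π2 x)) * (π1 * π2) := by rw [hπ1.2, mul_assoc]
  -- conjugation preserves commuting
  have conjC : ∀ a b c : Equiv.Perm X, Commute a b →
      Commute (c⁻¹ * a * c) (c⁻¹ * b * c) := by
    intro a b c h
    have heq : a * b = b * a := h
    show c⁻¹ * a * c * (c⁻¹ * b * c) = c⁻¹ * b * c * (c⁻¹ * a * c)
    calc c⁻¹ * a * c * (c⁻¹ * b * c) = c⁻¹ * (a * b) * c := by group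
      _ = c⁻¹ * (b * a) * c := by rw [heq]
      _ = c⁻¹ * b * c * (c⁻¹ * a * c) := by group
  tfae_have 1 → 2 := by
    intro h1 x
    constructor
    · have e := h1.1 x x
      simp only [mul_assoc] at e
      rw [hπ1.1 x, hπ1.1 (π2 x), cLL x (π1 x) π1] at e
      have e2 := mul_left_cancel e
      have e3 := mul_right_cancel e2
      exact e3.symm
    · have e := h1.2.1 x x
      simp only [mul_assoc] at e
      rw [hπ2.2 x, hπ2.2 (π1 x), cRR x (π2 x) π2] at e
      have e2 := mul_left_cancel e
      have e3 := mul_right_cancel e2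
      rw [hc x]
      exact e3.symm
  tfae_have 2 → 1 := by
    intro h2
    refine ⟨fun x y => ?_, fun x y => ?_, fun x y => ?_⟩
    · simp only [mul_assoc]
      rw [hπ1.1 y, hπ1.1 (π2 x), (h2 x).1, cLL x (π1 y) π1]
    · simp only [mul_assoc]
      have hx : R (π2 (π1 x)) = R x := by rw [← hc x]; exact (h2 x).2
      rw [hπ2.2 y, hπ2.2 (π1 x), hx, cRR x (π2 y) π2]
    · simp only [mul_assoc]
      rw [swL2 x π1, swR1 y π2, cLR (π2 x) (π1 y) (π1 * π2), hcomm]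
  tfae_have 2 → 3 := by
    intro h2 x
    exact ⟨(hAL x).trans (by rw [(h2 x).1]),
      (hAR x).trans (by rw [(h2 x).2])⟩
  tfae_have 3 → 2 := by
    intro h3 x
    exact ⟨mul_right_cancel ((hAL x).symm.trans (h3 x).1),
      mul_right_cancel ((hAR x).symm.trans (h3 x).2)⟩
  tfae_have 3 → 4 := by
    intro h3 φ hφ x
    have eL : φ⁻¹ * L (φ x) * φ = L x := by
      rw [mul_assoc, ← hφ.1 x]; group
    have eR : φ⁻¹ * R (φ x) * φ = R x := by
      rw [mul_assoc, ← hφ.2 x]; group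
    constructor
    · have := conjC (π1 * π2) (L (φ x)) φ (h3 (φ x)).1
      rwa [eL] at this
    · have := conjC (π1 * π2) (R (φ x)) φ (h3 (φ x)).2
      rwa [eR] at this
  tfae_have 4 → 3 := by
    intro h4 x
    have h1 : IsAuto L R (1 : Equiv.Perm X) := by
      constructor <;> intro x <;> simp
    have := h4 1 h1 x
    simpa using this
  tfae_finish
end

section
/- Let (X, L, R) be a 2-reductive solution and let π1, π2 be bijections of X satisfying, for all x, y ∈ X: L_x∘π1∘L_y = L_{π1(y)}∘π1∘L_{π2(x)}, R_x∘π2∘R_y = R_{π2(y)}∘π2∘R_{π1(x)}, and R_{π1(y)}∘π2∘L_x∘π1 = L_{π2(x)}∘π1∘R_y∘π2. Then the families σ_x = L_x∘π1 and τ_x = R_x∘π2 form a solution (they satisfy (B1)–(B3)) and this solution is 2-permutational. -/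
/-- The (π1,π2)-isotope of a 2-reductive solution is a 2-permutational solution. -/
theorem stmt_9 {X : Type*} (L R : X → Equiv.Perm X)
    (hsol : IsSolution L R) (hred : Is2Reductive L R)
    (π1 π2 : Equiv.Perm X) (hiso : IsoConds L R π1 π2) :
    IsSolution (fun x => L x * π1) (fun x => R x * π2) ∧
    Is2Permutational (fun x => L x * π1) (fun x => R x * π2) := by
  obtain ⟨h1, h2, h3, h4⟩ := hred
  obtain ⟨i1, i2, i3⟩ := hiso
  refine ⟨⟨?_, ?_, ?_⟩, ?_, ?_, ?_, ?_⟩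
  · intro x y
    simp only [Equiv.Perm.mul_apply, h1, h3]
    rw [show L x * π1 * (L y * π1) = (L x * π1 * L y) * π1 by group,
        show L (π1 y) * π1 * (L (π2 x) * π1) = (L (π1 y) * π1 * L (π2 x)) * π1 by group, i1]
  · intro x y
    simp only [Equiv.Perm.mul_apply, h2, h4]
    rw [show R x * π2 * (R y * π2) = (R x * π2 * R y) * π2 by group,
        show R (π2 y) * π2 * (R (π1 x) * π2) = (R (π2 y) * π2 * R (π1 x)) * π2 by group, i2]
  · intro x y z
    have := Equiv.ext_iff.mp (i3 x z) y
    simp only [Equiv.Perm.mul_apply] at this ⊢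
    rw [h4, h3]
    exact this
  · intro x y z
    simp only [Equiv.Perm.mul_apply, h1]
  · intro x y z
    simp only [Equiv.Perm.mul_apply, h2]
  · intro x y z
    simp only [Equiv.Perm.mul_apply, h3]
  · intro x y z
    simp only [Equiv.Perm.mul_apply, h4]
end

section
/- Let (X, σ, τ) be a 2-permutational solution and let e ∈ X. Then the families μ_x = σ_x∘σ_e⁻¹ and ν_x = τ_x∘τ_e⁻¹ form a solution (they satisfy (B1)–(B3)) and this solution is 2-reductive. -/
theorem Equiv.Perm.apply_inv_self {α : Type*} (f : Equiv.Perm α) (x : α) : f (f⁻¹ x) = x :=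
  Equiv.apply_symm_apply f x

theorem Equiv.Perm.inv_apply_self {α : Type*} (f : Equiv.Perm α) (x : α) : f⁻¹ (f x) = x :=
  Equiv.symm_apply_apply f x

/-- The (σ_e⁻¹, τ_e⁻¹)-isotope of a 2-permutational solution is a
2-reductive solution. -/
theorem stmt_10 {X : Type*} (σ τ : X → Equiv.Perm X)
    (hsol : IsSolution σ τ) (hper : Is2Permutational σ τ) (e : X) :
    IsSolution (fun x => σ x * (σ e)⁻¹) (fun x => τ x * (τ e)⁻¹) ∧
    Is2Reductive (fun x => σ x * (σ e)⁻¹) (fun x => τ x * (τ e)⁻¹) := by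
  obtain ⟨b1, b2, b3⟩ := hsol
  obtain ⟨p1, p2, p3, p4⟩ := hper
  -- ### σ-side
  have h1 : ∀ x y : X, σ x * σ y = σ (σ e y) * σ (τ e x) := by
    intro x y
    have h := b1 x y
    rwa [p1 x e y, p3 y e x] at h
  have hB : ∀ x : X, σ (τ e x) = (σ (σ e e))⁻¹ * (σ x * σ e) := by
    intro x; rw [h1 x e]; group
  have hA : ∀ y : X, σ (σ e y) = σ e * σ y * (σ (τ e e))⁻¹ := by
    intro y; rw [h1 e y]; group
  have hD : σ e * σ e = σ (σ e e) * σ (τ e e) := h1 e e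
  have P1 : ∀ x y : X, σ x * σ y = σ e * σ y * (σ e)⁻¹ * (σ e)⁻¹ * σ x * σ e := by
    intro x y
    calc σ x * σ y = σ (σ e y) * σ (τ e x) := h1 x y
      _ = (σ e * σ y * (σ (τ e e))⁻¹) * ((σ (σ e e))⁻¹ * (σ x * σ e)) := by rw [hA y, hB x]
      _ = σ e * σ y * (σ (σ e e) * σ (τ e e))⁻¹ * (σ x * σ e) := by group
      _ = σ e * σ y * (σ e * σ e)⁻¹ * (σ x * σ e) := by rw [← hD]
      _ = σ e * σ y * (σ e)⁻¹ * (σ e)⁻¹ * σ x * σ e := by group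
  have hcomm1 : ∀ x y : X,
      (σ e)⁻¹ * σ x * (σ y * (σ e)⁻¹) = σ y * (σ e)⁻¹ * ((σ e)⁻¹ * σ x) := by
    intro x y
    calc (σ e)⁻¹ * σ x * (σ y * (σ e)⁻¹)
        = (σ e)⁻¹ * (σ x * σ y) * (σ e)⁻¹ := by group
      _ = (σ e)⁻¹ * (σ e * σ y * (σ e)⁻¹ * (σ e)⁻¹ * σ x * σ e) * (σ e)⁻¹ := by rw [P1 x y]
      _ = σ y * (σ e)⁻¹ * ((σ e)⁻¹ * σ x) := by group
  have hmuS : ∀ x : X, σ x * (σ e)⁻¹ = (σ (σ e e))⁻¹ * σ ((τ e)⁻¹ x) := by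
    intro x
    have h := hB ((τ e)⁻¹ x)
    rw [Equiv.Perm.apply_inv_self] at h
    rw [h]; group
  have hc2 : ∀ x w : X, Commute ((σ e)⁻¹ * σ x) ((σ (σ e e))⁻¹ * σ w) := by
    intro x w
    have h := hcomm1 x (τ e w)
    rw [hmuS (τ e w), Equiv.Perm.inv_apply_self] at h
    exact h
  have hSS : ∀ x w : X, Commute ((σ e)⁻¹ * σ x) ((σ e)⁻¹ * σ w) := by
    intro x w
    have h := (hc2 x e).inv_right.mul_right (hc2 x w)
    rwa [show ((σ (σ e e))⁻¹ * σ e)⁻¹ * ((σ (σ e e))⁻¹ * σ w) = (σ e)⁻¹ * σ w by group] at h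
  have hmuS2 : ∀ x : X, σ x * (σ e)⁻¹
      = ((σ e)⁻¹ * σ (σ e e))⁻¹ * ((σ e)⁻¹ * σ ((τ e)⁻¹ x)) := by
    intro x; rw [hmuS x]; group
  have hmm : ∀ x y : X, Commute (σ x * (σ e)⁻¹) (σ y * (σ e)⁻¹) := by
    intro x y
    rw [hmuS2 x, hmuS2 y]
    exact (((hSS (σ e e) (σ e e)).inv_left.inv_right).mul_right
            ((hSS (σ e e) ((τ e)⁻¹ y)).inv_left)).mul_left
          (((hSS ((τ e)⁻¹ x) (σ e e)).inv_right).mul_right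
            (hSS ((τ e)⁻¹ x) ((τ e)⁻¹ y)))
  -- ### τ-side (mirror)
  have h2 : ∀ x y : X, τ x * τ y = τ (τ e y) * τ (σ e x) := by
    intro x y
    have h := b2 x y
    rwa [p2 x e y, p4 y e x] at h
  have hBt : ∀ x : X, τ (σ e x) = (τ (τ e e))⁻¹ * (τ x * τ e) := by
    intro x; rw [h2 x e]; group
  have hAt : ∀ y : X, τ (τ e y) = τ e * τ y * (τ (σ e e))⁻¹ := by
    intro y; rw [h2 e y]; group
  have hDt : τ e * τ e = τ (τ e e) * τ (σ e e) := h2 e e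
  have P2 : ∀ x y : X, τ x * τ y = τ e * τ y * (τ e)⁻¹ * (τ e)⁻¹ * τ x * τ e := by
    intro x y
    calc τ x * τ y = τ (τ e y) * τ (σ e x) := h2 x y
      _ = (τ e * τ y * (τ (σ e e))⁻¹) * ((τ (τ e e))⁻¹ * (τ x * τ e)) := by rw [hAt y, hBt x]
      _ = τ e * τ y * (τ (τ e e) * τ (σ e e))⁻¹ * (τ x * τ e) := by group
      _ = τ e * τ y * (τ e * τ e)⁻¹ * (τ x * τ e) := by rw [← hDt]
      _ = τ e * τ y * (τ e)⁻¹ * (τ e)⁻¹ * τ x * τ e := by group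
  have hcomm1t : ∀ x y : X,
      (τ e)⁻¹ * τ x * (τ y * (τ e)⁻¹) = τ y * (τ e)⁻¹ * ((τ e)⁻¹ * τ x) := by
    intro x y
    calc (τ e)⁻¹ * τ x * (τ y * (τ e)⁻¹)
        = (τ e)⁻¹ * (τ x * τ y) * (τ e)⁻¹ := by group
      _ = (τ e)⁻¹ * (τ e * τ y * (τ e)⁻¹ * (τ e)⁻¹ * τ x * τ e) * (τ e)⁻¹ := by rw [P2 x y]
      _ = τ y * (τ e)⁻¹ * ((τ e)⁻¹ * τ x) := by group
  have hnuS : ∀ x : X, τ x * (τ e)⁻¹ = (τ (τ e e))⁻¹ * τ ((σ e)⁻¹ x) := by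
    intro x
    have h := hBt ((σ e)⁻¹ x)
    rw [Equiv.Perm.apply_inv_self] at h
    rw [h]; group
  have hc2t : ∀ x w : X, Commute ((τ e)⁻¹ * τ x) ((τ (τ e e))⁻¹ * τ w) := by
    intro x w
    have h := hcomm1t x (σ e w)
    rw [hnuS (σ e w), Equiv.Perm.inv_apply_self] at h
    exact h
  have hTT : ∀ x w : X, Commute ((τ e)⁻¹ * τ x) ((τ e)⁻¹ * τ w) := by
    intro x w
    have h := (hc2t x e).inv_right.mul_right (hc2t x w)
    rwa [show ((τ (τ e e))⁻¹ * τ e)⁻¹ * ((τ (τ e e))⁻¹ * τ w) = (τ e)⁻¹ * τ w by group] at h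
  have hnuS2 : ∀ x : X, τ x * (τ e)⁻¹
      = ((τ e)⁻¹ * τ (τ e e))⁻¹ * ((τ e)⁻¹ * τ ((σ e)⁻¹ x)) := by
    intro x; rw [hnuS x]; group
  have hnn : ∀ x y : X, Commute (τ x * (τ e)⁻¹) (τ y * (τ e)⁻¹) := by
    intro x y
    rw [hnuS2 x, hnuS2 y]
    exact (((hTT (τ e e) (τ e e)).inv_left.inv_right).mul_right
            ((hTT (τ e e) ((σ e)⁻¹ y)).inv_left)).mul_left
          (((hTT ((σ e)⁻¹ x) (τ e e)).inv_right).mul_right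
            (hTT ((σ e)⁻¹ x) ((σ e)⁻¹ y)))
  -- ### mixed commutation, from (B3) + 2-permutationality
  have h3 : ∀ x z : X, τ (σ e z) * σ x = σ (τ e x) * τ z := by
    intro x z
    ext y
    simp only [Equiv.Perm.mul_apply]
    have h := b3 x y z
    rwa [p4 (τ y x) e z, p3 (σ y z) e x] at h
  have hST : ∀ x z : X, Commute ((σ e)⁻¹ * σ x) ((τ e)⁻¹ * τ z) := by
    intro x z
    show (σ e)⁻¹ * σ x * ((τ e)⁻¹ * τ z) = (τ e)⁻¹ * τ z * ((σ e)⁻¹ * σ x)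
    calc (σ e)⁻¹ * σ x * ((τ e)⁻¹ * τ z)
        = (σ e)⁻¹ * (τ (σ e e))⁻¹ * (τ (σ e e) * σ x * (τ e)⁻¹) * τ z := by group
      _ = (σ e)⁻¹ * (τ (σ e e))⁻¹ * (σ (τ e x) * τ e * (τ e)⁻¹) * τ z := by rw [h3 x e]
      _ = (σ e)⁻¹ * (τ (σ e e))⁻¹ * (σ (τ e x) * τ z) := by group
      _ = (σ e)⁻¹ * (τ (σ e e))⁻¹ * (τ (σ e z) * σ x) := by rw [← h3 x z]
      _ = (σ e)⁻¹ * (τ (σ e e))⁻¹ * (τ (σ e z) * σ e) * ((σ e)⁻¹ * σ x) := by group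
      _ = (σ e)⁻¹ * (τ (σ e e))⁻¹ * (σ (τ e e) * τ z) * ((σ e)⁻¹ * σ x) := by rw [h3 e z]
      _ = (σ e)⁻¹ * (τ (σ e e))⁻¹ * (σ (τ e e) * τ e) * ((τ e)⁻¹ * τ z) * ((σ e)⁻¹ * σ x) := by
          group
      _ = (σ e)⁻¹ * (τ (σ e e))⁻¹ * (τ (σ e e) * σ e) * ((τ e)⁻¹ * τ z) * ((σ e)⁻¹ * σ x) := by
          rw [← h3 e e]
      _ = (τ e)⁻¹ * τ z * ((σ e)⁻¹ * σ x) := by group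
  have hmn : ∀ x z : X, Commute (σ x * (σ e)⁻¹) (τ z * (τ e)⁻¹) := by
    intro x z
    rw [hmuS2 x, hnuS2 z]
    exact (((hST (σ e e) (τ e e)).inv_left.inv_right).mul_right
            ((hST (σ e e) ((σ e)⁻¹ z)).inv_left)).mul_left
          (((hST ((τ e)⁻¹ x) (τ e e)).inv_right).mul_right
            (hST ((τ e)⁻¹ x) ((σ e)⁻¹ z)))
  -- ### assembly
  refine ⟨⟨?_, ?_, ?_⟩, ?_, ?_, ?_, ?_⟩
  · -- (B1) for the isotope
    intro x y
    simp only [Equiv.Perm.mul_apply]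
    rw [p1 x e ((σ e)⁻¹ y), Equiv.Perm.apply_inv_self,
        p3 y e ((τ e)⁻¹ x), Equiv.Perm.apply_inv_self]
    exact hmm x y
  · -- (B2) for the isotope
    intro x y
    simp only [Equiv.Perm.mul_apply]
    rw [p2 x e ((τ e)⁻¹ y), Equiv.Perm.apply_inv_self,
        p4 y e ((σ e)⁻¹ x), Equiv.Perm.apply_inv_self]
    exact hnn x y
  · -- (B3) for the isotope
    intro x y z
    simp only [Equiv.Perm.mul_apply]
    rw [p4 (τ y ((τ e)⁻¹ x)) e ((σ e)⁻¹ z), Equiv.Perm.apply_inv_self,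
        p3 (σ y ((σ e)⁻¹ z)) e ((τ e)⁻¹ x), Equiv.Perm.apply_inv_self]
    have h := congrArg (fun g : Equiv.Perm X => g y) (hmn x z).eq
    simp only [Equiv.Perm.mul_apply] at h
    exact h.symm
  · -- 2-reductivity, σσ
    intro x y
    simp only [Equiv.Perm.mul_apply]
    rw [p1 x e ((σ e)⁻¹ y), Equiv.Perm.apply_inv_self]
  · -- ττ
    intro x y
    simp only [Equiv.Perm.mul_apply]
    rw [p2 x e ((τ e)⁻¹ y), Equiv.Perm.apply_inv_self]
  · -- στ
    intro x y
    simp only [Equiv.Perm.mul_apply]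
    rw [p3 x e ((τ e)⁻¹ y), Equiv.Perm.apply_inv_self]
  · -- τσ
    intro x y
    simp only [Equiv.Perm.mul_apply]
    rw [p4 x e ((σ e)⁻¹ y), Equiv.Perm.apply_inv_self]
end

section
/- Let (X, σ, τ) be a 2-permutational solution and define U, T : X → X by U(x) = σ_x⁻¹(x) and T(x) = τ_x⁻¹(x). Then U is a bijection whose two-sided inverse is the map x ↦ σ_{τ_x⁻¹(x)}(x), T is a bijection whose two-sided inverse is the map x ↦ τ_{σ_x⁻¹(x)}(x), and U and T commute: U∘T = T∘U. -/
/-- For a 2-permutational solution, the diagonal maps U and T are bijections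
with the indicated two-sided inverses, and they commute. -/
theorem stmt_11 {X : Type*} (σ τ : X → Equiv.Perm X)
    (hsol : IsSolution σ τ) (hper : Is2Permutational σ τ)
    (U T : X → X)
    (hU : ∀ x : X, U x = (σ x)⁻¹ x) (hT : ∀ x : X, T x = (τ x)⁻¹ x) :
    (Function.LeftInverse (fun x => σ ((τ x)⁻¹ x) x) U ∧
      Function.RightInverse (fun x => σ ((τ x)⁻¹ x) x) U) ∧
    (Function.LeftInverse (fun x => τ ((σ x)⁻¹ x) x) T ∧
      Function.RightInverse (fun x => τ ((σ x)⁻¹ x) x) T) ∧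
    U ∘ T = T ∘ U := by
  obtain ⟨b1, b2, b3⟩ := hsol
  obtain ⟨p1, p2, p3, p4⟩ := hper
  have hτT : ∀ x : X, τ x (T x) = x := fun x => by
    rw [hT]; exact Equiv.apply_symm_apply _ _
  have hσU : ∀ x : X, σ x (U x) = x := fun x => by
    rw [hU]; exact Equiv.apply_symm_apply _ _
  have K1 : ∀ w x : X, σ (τ w (T x)) = σ x := fun w x => by
    rw [p3 w x (T x), hτT]
  have K2 : ∀ w x : X, τ (σ w (U x)) = τ x := fun w x => by
    rw [p4 w x (U x), hσU]
  have G1 : ∀ x : X, σ (σ (T x) x) x = σ (T x) x := by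
    intro x
    have h := DFunLike.congr_fun (b1 (T x) x) (U x)
    simp only [Equiv.Perm.mul_apply, hσU, hτT] at h
    exact h.symm
  have G1' : ∀ x : X, τ (τ (U x) x) x = τ (U x) x := by
    intro x
    have h := DFunLike.congr_fun (b2 (U x) x) (T x)
    simp only [Equiv.Perm.mul_apply, hσU, hτT] at h
    exact h.symm
  refine ⟨⟨?_, ?_⟩, ⟨?_, ?_⟩, ?_⟩
  · intro x
    show σ ((τ (U x))⁻¹ (U x)) (U x) = x
    rw [← hT]
    have h := G1 (U x)
    rw [p1 (T (U x)) x (U x)] at h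
    simp only [hσU] at h
    exact h.symm
  · intro x
    show U (σ ((τ x)⁻¹ x) x) = x
    rw [← hT, hU, Equiv.Perm.inv_def, Equiv.symm_apply_eq]
    exact (G1 x).symm
  · intro x
    show τ ((σ (T x))⁻¹ (T x)) (T x) = x
    rw [← hU]
    have h := G1' (T x)
    rw [p2 (U (T x)) x (T x)] at h
    simp only [hτT] at h
    exact h.symm
  · intro x
    show T (τ ((σ x)⁻¹ x) x) = x
    rw [← hU, hT, Equiv.Perm.inv_def, Equiv.symm_apply_eq]
    exact (G1' x).symm
  · funext x
    show U (T x) = T (U x)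
    have h := b3 (T x) (U (T x)) (U x)
    rw [K2, K1, hσU, hτT] at h
    -- h : x = σ x (τ (U x) (U (T x)))
    have h2 : τ (U x) (U (T x)) = U x := by
      apply (σ x).injective
      rw [hσU]
      exact h.symm
    rw [hT (U x), Equiv.Perm.inv_def, Equiv.eq_symm_apply]
    exact h2
end

section
/- Let (X, σ, τ) be a 2-permutational solution and define U, T : X → X by U(x) = σ_x⁻¹(x) and T(x) = τ_x⁻¹(x). Then U and T are automorphisms of (X, σ, τ): for all x ∈ X, U∘σ_x = σ_{U(x)}∘U, U∘τ_x = τ_{U(x)}∘U, T∘σ_x = σ_{T(x)}∘T and T∘τ_x = τ_{T(x)}∘T. -/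
/-- The diagonal maps U and T are automorphisms of a 2-permutational solution. -/
theorem stmt_12 {X : Type*} (σ τ : X → Equiv.Perm X)
    (hsol : IsSolution σ τ) (hper : Is2Permutational σ τ)
    (U T : X → X)
    (hU : ∀ x : X, U x = (σ x)⁻¹ x) (hT : ∀ x : X, T x = (τ x)⁻¹ x) :
    Function.Bijective U ∧ Function.Bijective T ∧
    (∀ x : X, U ∘ ⇑(σ x) = ⇑(σ (U x)) ∘ U) ∧
    (∀ x : X, U ∘ ⇑(τ x) = ⇑(τ (U x)) ∘ U) ∧
    (∀ x : X, T ∘ ⇑(σ x) = ⇑(σ (T x)) ∘ T) ∧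
    (∀ x : X, T ∘ ⇑(τ x) = ⇑(τ (T x)) ∘ T) := by
  obtain ⟨B1, B2, B3⟩ := hsol
  obtain ⟨P1, P2, P3, P4⟩ := hper
  have keyU : ∀ x : X, σ x (U x) = x := fun x => by
    rw [hU x]; exact (σ x).apply_symm_apply x
  have keyT : ∀ x : X, τ x (T x) = x := fun x => by
    rw [hT x]; exact (τ x).apply_symm_apply x
  have sU : ∀ x y : X, σ (U x) = σ (τ y x) := by
    intro x y
    have h := B1 x (U x)
    rw [keyU x] at h
    have h2 := mul_left_cancel h
    rw [h2]
    exact P3 (U x) y x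
  have tT : ∀ x y : X, τ (T x) = τ (σ y x) := by
    intro x y
    have h := B2 x (T x)
    rw [keyT x] at h
    have h2 := mul_left_cancel h
    rw [h2]
    exact P4 (T x) y x
  refine ⟨?_, ?_, ?_, ?_, ?_, ?_⟩
  · apply Function.bijective_iff_has_inverse.mpr
    refine ⟨fun w => σ (σ w w) w, fun x => ?_, fun w => ?_⟩
    · show σ (σ (U x) (U x)) (U x) = x
      rw [P1 (U x) x (U x), keyU x]
      exact keyU x
    · show U (σ (σ w w) w) = w
      rw [hU, P1 (σ w w) w w]
      exact (σ (σ w w)).symm_apply_apply w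
  · apply Function.bijective_iff_has_inverse.mpr
    refine ⟨fun w => τ (τ w w) w, fun x => ?_, fun w => ?_⟩
    · show τ (τ (T x) (T x)) (T x) = x
      rw [P2 (T x) x (T x), keyT x]
      exact keyT x
    · show T (τ (τ w w) w) = w
      rw [hT, P2 (τ w w) w w]
      exact (τ (τ w w)).symm_apply_apply w
  · intro x
    funext y
    simp only [Function.comp_apply]
    have h := DFunLike.congr_fun (B1 x y) (U y)
    simp only [Equiv.Perm.mul_apply] at h
    rw [keyU y] at h
    rw [hU (σ x y), sU x y, Equiv.Perm.inv_eq_iff_eq]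
    exact h
  · intro x
    funext y
    simp only [Function.comp_apply]
    have h := B3 y (U y) (U x)
    rw [keyU y, P4 (τ (U y) y) x (U x), keyU x, P3 (σ (U y) (U x)) x y] at h
    rw [hU (τ x y), Equiv.Perm.inv_eq_iff_eq]
    exact h
  · intro x
    funext y
    simp only [Function.comp_apply]
    have h := B3 (T x) (T y) y
    rw [keyT y, P4 (τ (T y) (T x)) x y, P3 (σ (T y) y) x (T x), keyT x] at h
    rw [hT (σ x y), Equiv.Perm.inv_eq_iff_eq]
    exact h.symm
  · intro x
    funext y
    simp only [Function.comp_apply]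
    have h := DFunLike.congr_fun (B2 x y) (T y)
    simp only [Equiv.Perm.mul_apply] at h
    rw [keyT y] at h
    rw [hT (τ x y), tT x y, Equiv.Perm.inv_eq_iff_eq]
    exact h
end

section
/- Let (X, σ, τ) be a 2-permutational solution and define U, T : X → X by U(x) = σ_x⁻¹(x) and T(x) = τ_x⁻¹(x). Then the maps L_x = σ_x∘U and R_x = τ_x∘T are bijections of X and form a solution (they satisfy (B1)–(B3)) that is square-free (L_x(x) = x = R_x(x) for all x) and 2-reductive. -/
/-- The (U,T)-isotope of a 2-permutational solution consists of bijections,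
satisfies (B1)--(B3), and is square-free and 2-reductive. -/
theorem stmt_13 {X : Type*} (σ τ : X → Equiv.Perm X)
    (hsol : IsSolution σ τ) (hper : Is2Permutational σ τ)
    (U T : X → X)
    (hU : ∀ x : X, U x = (σ x)⁻¹ x) (hT : ∀ x : X, T x = (τ x)⁻¹ x)
    (L R : X → X → X)
    (hL : ∀ x : X, L x = ⇑(σ x) ∘ U) (hR : ∀ x : X, R x = ⇑(τ x) ∘ T) :
    (∀ x : X, Function.Bijective (L x)) ∧
    (∀ x : X, Function.Bijective (R x)) ∧
    (∀ x y : X, L x ∘ L y = L (L x y) ∘ L (R y x)) ∧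
    (∀ x y : X, R x ∘ R y = R (R x y) ∘ R (L y x)) ∧
    (∀ x y z : X, R (L (R y x) z) (L x y) = L (R (L y z) x) (R z y)) ∧
    (∀ x : X, L x x = x ∧ R x x = x) ∧
    (∀ x y : X, L (L x y) = L y ∧ R (R x y) = R y ∧ L (R x y) = L y ∧ R (L x y) = R y) := by
  obtain ⟨b1, b2, b3⟩ := hsol
  obtain ⟨hp1, hp2, hp3, hp4⟩ := hper
  -- class computation lemmas (p z = σ (σ z z), q z = σ (τ z z), p' z = τ (τ z z), q' z = τ (σ z z))
  have c1 : ∀ a z : X, σ (σ a z) = σ (σ z z) := fun a z => hp1 a z z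
  have c2 : ∀ a z : X, σ (τ a z) = σ (τ z z) := fun a z => hp3 a z z
  have c3 : ∀ a z : X, τ (τ a z) = τ (τ z z) := fun a z => hp2 a z z
  have c4 : ∀ a z : X, τ (σ a z) = τ (σ z z) := fun a z => hp4 a z z
  -- (A1)  σ x σ y = p y · q x
  have A1 : ∀ x y : X, σ x * σ y = σ (σ y y) * σ (τ x x) := by
    intro x y; rw [b1 x y, c1 x y, c2 y x]
  -- (A2)  τ x τ y = p' y · q' x
  have A2 : ∀ x y : X, τ x * τ y = τ (τ y y) * τ (σ x x) := by
    intro x y; rw [b2 x y, c3 x y, c4 y x]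
  -- (A3)  q' z · σ x = q x · τ z
  have A3 : ∀ x z : X, τ (σ z z) * σ x = σ (τ x x) * τ z := by
    intro x z
    apply Equiv.ext
    intro w
    have h := b3 x w z
    rw [c4 (τ w x) z, c2 (σ w z) x] at h
    simpa [Equiv.Perm.mul_apply] using h
  -- classes of inverse images
  have E3 : ∀ a c : X, σ (σ ((σ a)⁻¹ c) ((σ a)⁻¹ c)) = σ c := by
    intro a c; rw [← c1 a ((σ a)⁻¹ c), Equiv.Perm.inv_def, Equiv.apply_symm_apply]
  have E3b : ∀ a c : X, σ (τ ((τ a)⁻¹ c) ((τ a)⁻¹ c)) = σ c := by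
    intro a c; rw [← c2 a ((τ a)⁻¹ c), Equiv.Perm.inv_def, Equiv.apply_symm_apply]
  have E3' : ∀ a c : X, τ (τ ((τ a)⁻¹ c) ((τ a)⁻¹ c)) = τ c := by
    intro a c; rw [← c3 a ((τ a)⁻¹ c), Equiv.Perm.inv_def, Equiv.apply_symm_apply]
  have E3b' : ∀ a c : X, τ (σ ((σ a)⁻¹ c) ((σ a)⁻¹ c)) = τ c := by
    intro a c; rw [← c4 a ((σ a)⁻¹ c), Equiv.Perm.inv_def, Equiv.apply_symm_apply]
  -- (P3) q (σ a x) = σ x , (P4) p (τ a y) = σ y , and mirrors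
  have P3 : ∀ a x : X, σ (τ (σ a x) (σ a x)) = σ x := by
    intro a x
    have h := A1 (σ a x) x
    rw [c1 a x] at h
    exact (mul_left_cancel h).symm
  have P3' : ∀ a x : X, τ (σ (τ a x) (τ a x)) = τ x := by
    intro a x
    have h := A2 (τ a x) x
    rw [c3 a x] at h
    exact (mul_left_cancel h).symm
  -- (E4) σ ((σ a)⁻¹ c) = q c , (E4') τ ((τ a)⁻¹ c) = q' c
  have E4 : ∀ a c : X, σ ((σ a)⁻¹ c) = σ (τ c c) := by
    intro a c
    have h := A1 c ((σ a)⁻¹ c)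
    rw [E3 a c] at h
    exact mul_left_cancel h
  have E4' : ∀ a c : X, τ ((τ a)⁻¹ c) = τ (σ c c) := by
    intro a c
    have h := A2 c ((τ a)⁻¹ c)
    rw [E3' a c] at h
    exact mul_left_cancel h
  -- (Λ) σ x · q w = σ w · q x  and mirror
  have Lam : ∀ x w : X, σ x * σ (τ w w) = σ w * σ (τ x x) := by
    intro x w
    have h := A1 x ((σ x)⁻¹ w)
    rw [E3 x w, E4 x w] at h
    exact h
  have Lam' : ∀ x w : X, τ x * τ (σ w w) = τ w * τ (σ x x) := by
    intro x w
    have h := A2 x ((τ x)⁻¹ w)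
    rw [E3' x w, E4' x w] at h
    exact h
  -- (M6) τ z · σ x = q x · p' z ; (M5) q' z · p x = σ x · τ z
  have M6 : ∀ z x : X, τ z * σ x = σ (τ x x) * τ (τ z z) := by
    intro z x
    have h := A3 x (τ z z)
    rw [P3' z z] at h
    exact h
  have M5 : ∀ z x : X, τ (σ z z) * σ (σ x x) = σ x * τ z := by
    intro z x
    have h := A3 (σ x x) z
    rw [P3 x x] at h
    exact h
  -- (mO3) σ ((τ a)⁻¹ c) = p c ; (O3) τ ((σ a)⁻¹ c) = p' c
  have mO3 : ∀ a c : X, σ ((τ a)⁻¹ c) = σ (σ c c) := by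
    intro a c
    have h := A3 ((τ a)⁻¹ c) c
    rw [E3b a c, ← M5 c c] at h
    exact mul_left_cancel h
  have O3 : ∀ a c : X, τ ((σ a)⁻¹ c) = τ (τ c c) := by
    intro a c
    have h := A3 c ((σ a)⁻¹ c)
    rw [E3b' a c, M6 c c] at h
    exact (mul_left_cancel h).symm
  -- (Λp) p w · σ y = p y · σ w  and mirror
  have Lp : ∀ w y : X, σ (σ w w) * σ y = σ (σ y y) * σ w := by
    intro w y
    have h := A1 ((τ y)⁻¹ w) y
    rw [mO3 y w, E3b y w] at h
    exact h
  have Lp' : ∀ w y : X, τ (τ w w) * τ y = τ (τ y y) * τ w := by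
    intro w y
    have h := A2 ((σ y)⁻¹ w) y
    rw [O3 y w, E3b' y w] at h
    exact h
  -- (M3*) τ c · p x = σ x · p' c
  have M3s : ∀ c x : X, τ c * σ (σ x x) = σ x * τ (τ c c) := by
    intro c x
    have h := M6 c (σ x x)
    rw [P3 x x] at h
    exact h
  -- pointwise forms of L and R
  have Lapp : ∀ a b : X, L a b = σ a ((σ b)⁻¹ b) := by
    intro a b; rw [hL a]; simp only [Function.comp_apply, hU b]
  have Rapp : ∀ a b : X, R a b = τ a ((τ b)⁻¹ b) := by
    intro a b; rw [hR a]; simp only [Function.comp_apply, hT b]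
  -- classes of images of L and R
  have CL1 : ∀ x y : X, σ (L x y) = σ y := by
    intro x y; rw [Lapp x y, c1 x ((σ y)⁻¹ y), E3 y y]
  have CL2 : ∀ x y : X, τ (L x y) = τ y := by
    intro x y; rw [Lapp x y, c4 x ((σ y)⁻¹ y), E3b' y y]
  have CL3 : ∀ x y : X, σ (R x y) = σ y := by
    intro x y; rw [Rapp x y, c2 x ((τ y)⁻¹ y), E3b y y]
  have CL4 : ∀ x y : X, τ (R x y) = τ y := by
    intro x y; rw [Rapp x y, c3 x ((τ y)⁻¹ y), E3' y y]
  -- bijectivity of U and T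
  have Ubij : Function.Bijective U := by
    constructor
    · intro a b hab
      rw [hU a, hU b] at hab
      have hsab : σ a = σ b := by
        have h1 := (E3 a a).symm
        rw [hab] at h1
        exact h1.trans (E3 b b)
      calc a = σ a ((σ a)⁻¹ a) := (Equiv.apply_symm_apply _ _).symm
        _ = σ b ((σ b)⁻¹ b) := by rw [hab, hsab]
        _ = b := Equiv.apply_symm_apply _ _
    · intro y
      refine ⟨σ (σ y y) y, ?_⟩
      rw [hU, c1 (σ y y) y, Equiv.Perm.inv_def, Equiv.symm_apply_apply]
  have Tbij : Function.Bijective T := by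
    constructor
    · intro a b hab
      rw [hT a, hT b] at hab
      have htab : τ a = τ b := by
        have h1 := (E3' a a).symm
        rw [hab] at h1
        exact h1.trans (E3' b b)
      calc a = τ a ((τ a)⁻¹ a) := (Equiv.apply_symm_apply _ _).symm
        _ = τ b ((τ b)⁻¹ b) := by rw [hab, htab]
        _ = b := Equiv.apply_symm_apply _ _
    · intro y
      refine ⟨τ (τ y y) y, ?_⟩
      rw [hT, c3 (τ y y) y, Equiv.Perm.inv_def, Equiv.symm_apply_apply]
  -- commutation identities
  have hInv : ∀ y w : X, (σ w)⁻¹ * σ y = σ (τ y y) * (σ (τ w w))⁻¹ := by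
    intro y w
    rw [inv_mul_eq_iff_eq_mul, ← mul_assoc, ← Lam y w, mul_inv_cancel_right]
  have hInv' : ∀ y w : X, (τ w)⁻¹ * τ y = τ (σ y y) * (τ (σ w w))⁻¹ := by
    intro y w
    rw [inv_mul_eq_iff_eq_mul, ← mul_assoc, ← Lam' y w, mul_inv_cancel_right]
  have KC : ∀ x y w : X, σ x * ((σ w)⁻¹ * σ y) = σ y * ((σ w)⁻¹ * σ x) := by
    intro x y w
    rw [hInv y w, hInv x w, ← mul_assoc, ← mul_assoc, Lam x y]
  have KC' : ∀ x y w : X, τ x * ((τ w)⁻¹ * τ y) = τ y * ((τ w)⁻¹ * τ x) := by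
    intro x y w
    rw [hInv' y w, hInv' x w, ← mul_assoc, ← mul_assoc, Lam' x y]
  have S1 : ∀ x y : X, σ x * (σ y)⁻¹ = (σ (σ y y))⁻¹ * σ (σ x x) := by
    intro x y
    rw [mul_inv_eq_iff_eq_mul, mul_assoc, Lp x y, inv_mul_cancel_left]
  have S2 : ∀ z y : X, τ z * (τ y)⁻¹ = (τ (τ y y))⁻¹ * τ (τ z z) := by
    intro z y
    rw [mul_inv_eq_iff_eq_mul, mul_assoc, Lp' z y, inv_mul_cancel_left]
  have S3 : ∀ z y a : X, (τ (τ y y))⁻¹ * τ (τ z z)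
      = (σ (σ a a))⁻¹ * ((τ y)⁻¹ * (τ z * σ (σ a a))) := by
    intro z y a
    have h1 : ∀ c : X, τ (τ c c) = (σ a)⁻¹ * (τ c * σ (σ a a)) := by
      intro c; rw [M3s c a, inv_mul_cancel_left]
    rw [h1 z, h1 y]; group
  have KD : ∀ x z y : X, (τ z * (τ y)⁻¹) * (σ x * (σ y)⁻¹)
      = (σ x * (σ y)⁻¹) * (τ z * (τ y)⁻¹) := by
    intro x z y
    calc (τ z * (τ y)⁻¹) * (σ x * (σ y)⁻¹)
        = ((σ (σ y y))⁻¹ * ((τ y)⁻¹ * (τ z * σ (σ y y))))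
            * ((σ (σ y y))⁻¹ * σ (σ x x)) := by
          rw [S2 z y, S3 z y y, S1 x y]
      _ = ((σ (σ y y))⁻¹ * σ (σ x x))
            * ((σ (σ x x))⁻¹ * ((τ y)⁻¹ * (τ z * σ (σ x x)))) := by
          group
      _ = (σ x * (σ y)⁻¹) * (τ z * (τ y)⁻¹) := by
          rw [← S1 x y, ← S3 z y x, ← S2 z y]
  -- pointwise composition formulas
  have LLpt : ∀ x y w : X, L x (L y w) = (σ x * ((σ w)⁻¹ * σ y) * (σ w)⁻¹) w := by
    intro x y w
    rw [Lapp x (L y w), CL1 y w, Lapp y w]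
    simp only [Equiv.Perm.mul_apply]
  have RRpt : ∀ x y w : X, R x (R y w) = (τ x * ((τ w)⁻¹ * τ y) * (τ w)⁻¹) w := by
    intro x y w
    rw [Rapp x (R y w), CL4 y w, Rapp y w]
    simp only [Equiv.Perm.mul_apply]
  have RLpt : ∀ z x y : X, R z (L x y) = ((τ z * (τ y)⁻¹) * (σ x * (σ y)⁻¹)) y := by
    intro z x y
    rw [Rapp z (L x y), CL2 x y, Lapp x y]
    simp only [Equiv.Perm.mul_apply]
  have LRpt : ∀ z x y : X, L x (R z y) = ((σ x * (σ y)⁻¹) * (τ z * (τ y)⁻¹)) y := by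
    intro z x y
    rw [Lapp x (R z y), CL3 z y, Rapp z y]
    simp only [Equiv.Perm.mul_apply]
  refine ⟨?_, ?_, ?_, ?_, ?_, ?_, ?_⟩
  · -- bijectivity of L x
    intro x
    rw [hL x]
    exact (Equiv.bijective (σ x)).comp Ubij
  · -- bijectivity of R x
    intro x
    rw [hR x]
    exact (Equiv.bijective (τ x)).comp Tbij
  · -- (B1) for L
    intro x y
    have e1 : L (L x y) = L y := by rw [hL (L x y), CL1 x y, ← hL y]
    have e2 : L (R y x) = L x := by rw [hL (R y x), CL3 y x, ← hL x]
    rw [e1, e2]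
    funext w
    simp only [Function.comp_apply]
    rw [LLpt x y w, LLpt y x w, KC x y w]
  · -- (B2) for R
    intro x y
    have e1 : R (R x y) = R y := by rw [hR (R x y), CL4 x y, ← hR y]
    have e2 : R (L y x) = R x := by rw [hR (L y x), CL2 y x, ← hR x]
    rw [e1, e2]
    funext w
    simp only [Function.comp_apply]
    rw [RRpt x y w, RRpt y x w, KC' x y w]
  · -- (B3) for (L, R)
    intro x y z
    have e1 : R (L (R y x) z) = R z := by
      rw [hR (L (R y x) z), CL2 (R y x) z, ← hR z]
    have e2 : L (R (L y z) x) = L x := by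
      rw [hL (R (L y z) x), CL3 (L y z) x, ← hL x]
    rw [e1, e2, RLpt z x y, LRpt z x y, KD x z y]
  · -- square-free
    intro x
    constructor
    · rw [Lapp x x, Equiv.Perm.inv_def, Equiv.apply_symm_apply]
    · rw [Rapp x x, Equiv.Perm.inv_def, Equiv.apply_symm_apply]
  · -- 2-reductive
    intro x y
    exact ⟨by rw [hL (L x y), CL1 x y, ← hL y],
      by rw [hR (R x y), CL4 x y, ← hR y],
      by rw [hL (R x y), CL3 x y, ← hL y],
      by rw [hR (L x y), CL2 x y, ← hR y]⟩
end

section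
/- Let (X, σ, τ) be a 2-permutational solution with diagonal maps U(x) = σ_x⁻¹(x) and T(x) = τ_x⁻¹(x), and let L_x = σ_x∘U and R_x = τ_x∘T be its square-free (U,T)-isotope. Then U and T are automorphisms of (X, L, R): for all x ∈ X, U∘L_x = L_{U(x)}∘U, U∘R_x = R_{U(x)}∘U, T∘L_x = L_{T(x)}∘T and T∘R_x = R_{T(x)}∘T. -/
/-- The diagonal maps U and T of a 2-permutational solution are automorphisms
of its square-free (U,T)-isotope (X, L, R). -/
theorem stmt_15 {X : Type*} (σ τ : X → Equiv.Perm X)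
    (hsol : IsSolution σ τ) (hper : Is2Permutational σ τ)
    (U T : X → X)
    (hU : ∀ x : X, U x = (σ x)⁻¹ x) (hT : ∀ x : X, T x = (τ x)⁻¹ x)
    (L R : X → X → X)
    (hL : ∀ x : X, L x = ⇑(σ x) ∘ U) (hR : ∀ x : X, R x = ⇑(τ x) ∘ T) :
    (∀ x : X, U ∘ L x = L (U x) ∘ U) ∧
    (∀ x : X, U ∘ R x = R (U x) ∘ U) ∧
    (∀ x : X, T ∘ L x = L (T x) ∘ T) ∧
    (∀ x : X, T ∘ R x = R (T x) ∘ T) := by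
  obtain ⟨b1, b2, b3⟩ := hsol
  obtain ⟨p1, p2, p3, p4⟩ := hper
  have hσU : ∀ x : X, σ x (U x) = x := fun x => by
    rw [hU]; exact (σ x).apply_symm_apply x
  have hτT : ∀ x : X, τ x (T x) = x := fun x => by
    rw [hT]; exact (τ x).apply_symm_apply x
  -- L1 : σ (U x) = σ (τ w x)
  have L1 : ∀ w x : X, σ (U x) = σ (τ w x) := by
    intro w x
    have h := b1 x (U x)
    rw [hσU x] at h
    have h2 : σ (U x) = σ (τ (U x) x) := mul_left_cancel h
    rw [h2]; exact p3 (U x) w x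
  -- L2 : τ (T x) = τ (σ w x)
  have L2 : ∀ w x : X, τ (T x) = τ (σ w x) := by
    intro w x
    have h := b2 x (T x)
    rw [hτT x] at h
    have h2 : τ (T x) = τ (σ (T x) x) := mul_left_cancel h
    rw [h2]; exact p4 (T x) w x
  -- L3 : U (σ x y) = σ (U x) (U y)
  have L3 : ∀ x y : X, U (σ x y) = σ (U x) (U y) := by
    intro x y
    have h := Equiv.ext_iff.mp (b1 x y) (U y)
    simp only [Equiv.Perm.mul_apply] at h
    rw [hσU y, ← L1 y x] at h
    rw [hU (σ x y)]
    exact (σ (σ x y)).injective (by rw [Equiv.Perm.inv_def, Equiv.apply_symm_apply]; exact h)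
  -- L4 : T (τ x y) = τ (T x) (T y)
  have L4 : ∀ x y : X, T (τ x y) = τ (T x) (T y) := by
    intro x y
    have h := Equiv.ext_iff.mp (b2 x y) (T y)
    simp only [Equiv.Perm.mul_apply] at h
    rw [hτT y, ← L2 y x] at h
    rw [hT (τ x y)]
    exact (τ (τ x y)).injective (by rw [Equiv.Perm.inv_def, Equiv.apply_symm_apply]; exact h)
  -- L5 (B3') : τ (T z) (σ x y) = σ (U x) (τ z y)
  have L5 : ∀ x y z : X, τ (T z) (σ x y) = σ (U x) (τ z y) := by
    intro x y z
    have h := b3 x y z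
    rw [← L2 (τ y x) z, ← L1 (σ y z) x] at h
    exact h
  -- L6 : τ (τ b (σ x y)) = τ (τ b (T y))
  have L6 : ∀ b x y : X, τ (τ b (σ x y)) = τ (τ b (T y)) := by
    intro b x y
    calc τ (τ b (σ x y)) = τ (τ (T y) (σ x y)) := p2 b (T y) (σ x y)
      _ = τ (σ (U x) (τ y y)) := by rw [L5 x y y]
      _ = τ (T (τ y y)) := (L2 (U x) (τ y y)).symm
      _ = τ (τ (T y) (T y)) := by rw [L4 y y]
      _ = τ (τ b (T y)) := p2 (T y) b (T y)
  -- L7 : τ (τ a x) = τ (U x)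
  have L7 : ∀ a x : X, τ (τ a x) = τ (U x) := by
    intro a x
    calc τ (τ a x) = τ (τ a (σ x (U x))) := by rw [hσU x]
      _ = τ (τ a (T (U x))) := L6 a x (U x)
      _ = τ (τ (U x) (T (U x))) := p2 a (U x) (T (U x))
      _ = τ (U x) := by rw [hτT (U x)]
  -- L8 : σ (σ b (τ z y)) = σ (σ b (U y))
  have L8 : ∀ b z y : X, σ (σ b (τ z y)) = σ (σ b (U y)) := by
    intro b z y
    calc σ (σ b (τ z y)) = σ (σ (U y) (τ z y)) := p1 b (U y) (τ z y)
      _ = σ (τ (T z) (σ y y)) := by rw [L5 y y z]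
      _ = σ (U (σ y y)) := (L1 (T z) (σ y y)).symm
      _ = σ (σ (U y) (U y)) := by rw [L3 y y]
      _ = σ (σ b (U y)) := p1 (U y) b (U y)
  -- L9 : σ (σ a x) = σ (T x)
  have L9 : ∀ a x : X, σ (σ a x) = σ (T x) := by
    intro a x
    calc σ (σ a x) = σ (σ a (τ x (T x))) := by rw [hτT x]
      _ = σ (σ a (U (T x))) := L8 a x (T x)
      _ = σ (σ (T x) (U (T x))) := p1 a (T x) (U (T x))
      _ = σ (T x) := by rw [hσU (T x)]
  -- V : τ z (U x) = U (τ (T z) x)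
  have V : ∀ z x : X, τ z (U x) = U (τ (T z) x) := by
    intro z x
    have h := L5 x (U x) z
    rw [hσU x] at h
    rw [hU (τ (T z) x), ← L1 (T z) x, h, Equiv.Perm.inv_def, Equiv.symm_apply_apply]
  -- hTτ : τ (T (τ a x)) = τ x
  have hTτ : ∀ a x : X, τ (T (τ a x)) = τ x := by
    intro a x
    rw [L4 a x]
    calc τ (τ (T a) (T x)) = τ (τ x (T x)) := p2 (T a) x (T x)
      _ = τ x := by rw [hτT x]
  -- L10 : U (τ x y) = τ (U x) (U y)
  have L10 : ∀ x y : X, U (τ x y) = τ (U x) (U y) := by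
    intro x y
    calc U (τ x y) = U (τ (T (τ x x)) y) := by rw [hTτ x x]
      _ = τ (τ x x) (U y) := (V (τ x x) y).symm
      _ = τ (U x) (U y) := by rw [L7 x x]
  -- V' : σ z (T x) = T (σ (U z) x)
  have V' : ∀ z x : X, σ z (T x) = T (σ (U z) x) := by
    intro z x
    have h := L5 z (T x) x
    rw [hτT x] at h
    rw [hT (σ (U z) x), ← L2 (U z) x]
    rw [← h, Equiv.Perm.inv_def, Equiv.symm_apply_apply]
  -- hUσ : σ (U (σ a x)) = σ x
  have hUσ : ∀ a x : X, σ (U (σ a x)) = σ x := by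
    intro a x
    rw [L3 a x]
    calc σ (σ (U a) (U x)) = σ (σ x (U x)) := p1 (U a) x (U x)
      _ = σ x := by rw [hσU x]
  -- L11 : T (σ x y) = σ (T x) (T y)
  have L11 : ∀ x y : X, T (σ x y) = σ (T x) (T y) := by
    intro x y
    calc T (σ x y) = T (σ (U (σ x x)) y) := by rw [hUσ x x]
      _ = σ (σ x x) (T y) := (V' (σ x x) y).symm
      _ = σ (T x) (T y) := by rw [L9 x x]
  -- L12 : U (T x) = T (U x)
  have L12 : ∀ x : X, U (T x) = T (U x) := by
    intro x
    have h : τ (U x) (U (T x)) = U x := by rw [← L10 x (T x), hτT x]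
    have h2 : τ (U x) (T (U x)) = U x := hτT (U x)
    exact (τ (U x)).injective (h.trans h2.symm)
  refine ⟨?_, ?_, ?_, ?_⟩ <;> intro x <;> funext y <;>
    simp only [hL, hR, Function.comp_apply]
  · exact L3 x (U y)
  · rw [L10 x (T y), L12 y]
  · rw [L11 x (U y), L12 y]
  · exact L4 x (T y)
end

section
/- Let (X, L, R) and (X', L', R') be 2-reductive square-free solutions, let π1, π2 be automorphisms of (X, L, R) and π1', π2' automorphisms of (X', L', R'), both pairs satisfying conditions (is1)–(is2). Then the (π1,π2)-isotope of (X, L, R) (with σ_x = L_x∘π1, τ_x = R_x∘π2) and the (π1',π2')-isotope of (X', L', R') (with σ'_x = L'_x∘π1', τ'_x = R'_x∘π2') are isomorphic solutions if and only if there exists an isomorphism φ from (X, L, R) onto (X', L', R') such that π1' = φ∘π1∘φ⁻¹ and π2' = φ∘π2∘φ⁻¹. -/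
/-- Isomorphism criterion for isotopes of 2-reductive square-free solutions. -/
theorem stmt_16 {X X' : Type*}
    (L R : X → Equiv.Perm X) (L' R' : X' → Equiv.Perm X')
    (hsol : IsSolution L R) (hsol' : IsSolution L' R')
    (hred : Is2Reductive L R) (hred' : Is2Reductive L' R')
    (hsf : ∀ x : X, L x x = x ∧ R x x = x)
    (hsf' : ∀ x : X', L' x x = x ∧ R' x x = x)
    (π1 π2 : Equiv.Perm X) (π1' π2' : Equiv.Perm X')
    (hπ1 : IsAuto L R π1) (hπ2 : IsAuto L R π2)
    (hπ1' : IsAuto L' R' π1') (hπ2' : IsAuto L' R' π2')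
    (hiso : IsoConds L R π1 π2) (hiso' : IsoConds L' R' π1' π2') :
    (∃ Φ : X ≃ X', ∀ x y : X,
        Φ (L x (π1 y)) = L' (Φ x) (π1' (Φ y)) ∧
        Φ (R x (π2 y)) = R' (Φ x) (π2' (Φ y))) ↔
    (∃ φ : X ≃ X',
        (∀ x y : X, φ (L x y) = L' (φ x) (φ y)) ∧
        (∀ x y : X, φ (R x y) = R' (φ x) (φ y)) ∧
        (∀ z : X', π1' z = φ (π1 (φ.symm z))) ∧
        (∀ z : X', π2' z = φ (π2 (φ.symm z)))) := by
  constructor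
  · rintro ⟨Φ, hΦ⟩
    -- key: π1' (Φ y) = Φ (π1 y) and π2' (Φ y) = Φ (π2 y)
    have h1 : ∀ y : X, π1' (Φ y) = Φ (π1 y) := by
      intro y
      have h := (hΦ (π1 y) y).1
      rw [(hsf (π1 y)).1] at h
      exact ((L' (Φ (π1 y))).injective ((hsf' (Φ (π1 y))).1.trans h)).symm
    have h2 : ∀ y : X, π2' (Φ y) = Φ (π2 y) := by
      intro y
      have h := (hΦ (π2 y) y).2
      rw [(hsf (π2 y)).2] at h
      exact ((R' (Φ (π2 y))).injective ((hsf' (Φ (π2 y))).2.trans h)).symm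
    refine ⟨Φ, ?_, ?_, ?_, ?_⟩
    · intro x y
      have h := (hΦ x (π1.symm y)).1
      rw [π1.apply_symm_apply] at h
      rw [h, h1, π1.apply_symm_apply]
    · intro x y
      have h := (hΦ x (π2.symm y)).2
      rw [π2.apply_symm_apply] at h
      rw [h, h2, π2.apply_symm_apply]
    · intro z
      have := h1 (Φ.symm z)
      rw [Φ.apply_symm_apply] at this
      exact this
    · intro z
      have := h2 (Φ.symm z)
      rw [Φ.apply_symm_apply] at this
      exact this
  · rintro ⟨φ, hL, hR, hp1, hp2⟩
    refine ⟨φ, fun x y => ⟨?_, ?_⟩⟩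
    · rw [hL, hp1, φ.symm_apply_apply]
    · rw [hR, hp2, φ.symm_apply_apply]
end

section
/- Let (X, σ, τ) be a 2-permutational involutive solution. Then for all x, y ∈ X: σ_x∘τ_y∘τ_x = τ_{σ_x(y)} and τ_y∘τ_x⁻¹ = σ_x∘τ_{σ_x⁻¹(y)}. -/
theorem stmt_17 {X : Type*} (σ τ : X → Equiv.Perm X)
    (hsol : IsSolution σ τ) (hper : Is2Permutational σ τ)
    (hinv : IsInvolutive σ τ) :
    ∀ x y : X,
      σ x * τ y * τ x = τ (σ x y) ∧
      τ y * (τ x)⁻¹ = σ x * τ ((σ x)⁻¹ y) := by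
  obtain ⟨hB1, hB2, hB3⟩ := hsol
  obtain ⟨h1, h2, h3, h4⟩ := hper
  obtain ⟨hi1, hi2⟩ := hinv
  have key : ∀ x y : X, τ (τ x y) = (σ y)⁻¹ := by
    intro x y
    ext z
    have hw := hi2 y ((σ y)⁻¹ z)
    rw [h2 x ((σ y)⁻¹ z) y]
    simp only [Equiv.Perm.coe_inv, Equiv.apply_symm_apply] at hw
    simpa using hw
  have hg1 : ∀ x y : X, σ x * τ y * τ x = τ (σ x y) := by
    intro x y
    have h := hB2 y x
    rw [key y x] at h
    rw [mul_assoc, h]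
    group
  intro x y
  refine ⟨hg1 x y, ?_⟩
  have h := hg1 x ((σ x)⁻¹ y)
  simp only [← Equiv.Perm.mul_apply, mul_inv_cancel, Equiv.Perm.one_apply] at h
  rw [← h]
  group
end

section
/- Let (X, σ, τ) be a 2-permutational solution and let π1, π2 be bijections of X such that the families L_x = σ_x∘π1 and R_x = τ_x∘π2 form a 2-reductive solution (they satisfy (B1)–(B3) and the 2-reductivity identities). Then the solution (X, L, R) is involutive if and only if π2⁻¹ = σ_x∘π1∘τ_x for every x ∈ X. -/
/-- A 2-reductive (π1,π2)-isotope of a 2-permutational solution is involutive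
if and only if π2⁻¹ = σ_x ∘ π1 ∘ τ_x for every x. -/
theorem stmt_18 {X : Type*} (σ τ : X → Equiv.Perm X)
    (hsol : IsSolution σ τ) (hper : Is2Permutational σ τ)
    (π1 π2 : Equiv.Perm X)
    (hsolL : IsSolution (fun x => σ x * π1) (fun x => τ x * π2))
    (hredL : Is2Reductive (fun x => σ x * π1) (fun x => τ x * π2)) :
    IsInvolutive (fun x => σ x * π1) (fun x => τ x * π2) ↔
      ∀ x : X, π2⁻¹ = σ x * π1 * τ x := by
  obtain ⟨h1, h2, h3, h4⟩ := hredL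
  have H1 : ∀ a b : X, σ (σ a (π1 b)) = σ b := fun a b => mul_right_cancel (h1 a b)
  have H2 : ∀ a b : X, τ (τ a (π2 b)) = τ b := fun a b => mul_right_cancel (h2 a b)
  constructor
  · rintro ⟨hI1, hI2⟩ x
    ext z
    have e1 := hI1 (π2⁻¹ z) x
    simp only [Equiv.Perm.mul_apply, Equiv.Perm.inv_def, Equiv.apply_symm_apply] at e1 ⊢
    rw [H1] at e1
    exact e1.symm
  · intro h
    constructor
    · intro x y
      simp only [Equiv.Perm.mul_apply]
      rw [H1]
      have e : (π2⁻¹ : Equiv.Perm X) (π2 x) = x := π2.symm_apply_apply x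
      rw [h y] at e
      simpa [Equiv.Perm.mul_apply] using e
    · intro x y
      simp only [Equiv.Perm.mul_apply]
      rw [H2]
      have hp : π2 = (σ x * π1 * τ x)⁻¹ := by rw [← h x, inv_inv]
      simp [hp, mul_inv_rev, Equiv.Perm.mul_apply]
end

section
/- Let (X, σ, τ) be a 2-permutational solution and define U, T : X → X by U(x) = σ_x⁻¹(x) and T(x) = τ_x⁻¹(x). Then the following conditions are equivalent: (i) (X, σ, τ) is 2-reductive; (ii) (X, σ, τ) is distributive; (iii) every σ_x and every τ_x is an automorphism of (X, σ, τ); (iv) for all x ∈ X, U∘σ_x = σ_x∘U and T∘τ_x = τ_x∘T. -/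
/-- Key step for (iv) ⇒ (i): if the diagonal map commutes (pointwise) with all
translations `a x`, then `a (b y x) = a x`.  Stated generically so it applies
both to the σ-side and (mirrored) to the τ-side. -/
lemma key_gen {X : Type*} (a b : X → Equiv.Perm X)
    (hB : ∀ x y : X, a x * a y = a (a x y) * a (b y x))
    (hp1 : ∀ x y z : X, a (a x z) = a (a y z))
    (hp3 : ∀ x y z : X, a (b x z) = a (b y z))
    (hc : ∀ x y : X, (a (a x y))⁻¹ (a x y) = a x ((a y)⁻¹ y)) :
    ∀ x y : X, a (b y x) = a x := by
  intro x y
  have hc' : a (b y x) = a (b x x) := hp3 y x x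
  rw [hc']
  ext z
  have e0 : (a x * a z) ((a z)⁻¹ z) = (a (a x z) * a (b z x)) ((a z)⁻¹ z) := by
    rw [hB]
  simp only [Equiv.Perm.mul_apply, Equiv.Perm.coe_inv, Equiv.apply_symm_apply] at e0
  -- e0 : a x z = a (a x z) (a (b z x) ((a z)⁻¹ z))
  have e1 : (a (a x z))⁻¹ (a x z) = a (b z x) ((a z)⁻¹ z) := by
    apply (a (a x z)).injective
    simp only [Equiv.Perm.coe_inv, Equiv.apply_symm_apply]
    exact e0
  have e2 : a (b z x) = a (b x x) := hp3 z x x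
  rw [e2] at e1
  -- e1 : (a (a x z))⁻¹ (a x z) = a (b x x) ((a z)⁻¹ z)
  have e3 := hc (b x x) z
  have e4 : a (a (b x x) z) = a (a x z) := hp1 (b x x) x z
  rw [e4] at e3
  -- e3 : (a (a x z))⁻¹ (a (b x x) z) = a (b x x) ((a z)⁻¹ z)
  have e5 : (a (a x z))⁻¹ (a (b x x) z) = (a (a x z))⁻¹ (a x z) := e3.trans e1.symm
  exact ((a (a x z))⁻¹).injective e5

/-- Generic form of (ii) ⇒ part of (i). -/
lemma dist_red_gen {X : Type*} (a b : X → Equiv.Perm X)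
    (hB : ∀ x y : X, a x * a y = a (a x y) * a (b y x))
    (hp1 : ∀ x y z : X, a (a x z) = a (a y z))
    (hd : ∀ x y : X, a x * a y = a (a x y) * a x) :
    (∀ x y : X, a (a x y) = a y) ∧ (∀ x y : X, a (b y x) = a x) := by
  have h1 : ∀ x y : X, a (b y x) = a x := fun x y =>
    (mul_left_cancel ((hd x y).symm.trans (hB x y))).symm
  refine ⟨fun x y => (hp1 x y y).trans ?_, h1⟩
  exact mul_right_cancel ((hd y y).symm)

/-- From 2-reductivity and (B3): all σ's commute with all τ's (pointwise). -/
lemma red_comm {X : Type*} (σ τ : X → Equiv.Perm X) (hsol : IsSolution σ τ)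
    (hred : Is2Reductive σ τ) :
    ∀ x z y : X, τ z (σ x y) = σ x (τ z y) := by
  intro x z y
  have h := hsol.2.2 x y z
  rw [hred.2.2.2 (τ y x) z, hred.2.2.1 (σ y z) x] at h
  exact h

lemma red_to_dist {X : Type*} (σ τ : X → Equiv.Perm X) (hsol : IsSolution σ τ)
    (hred : Is2Reductive σ τ) : IsDistributive σ τ := by
  refine ⟨fun x y => (hsol.1 x y).trans ?_, fun x y => (hsol.2.1 x y).trans ?_⟩
  · rw [hred.2.2.1 y x]
  · rw [hred.2.2.2 y x]

/-- For a 2-permutational solution, being 2-reductive, being distributive,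
all translations being automorphisms, and the diagonal maps commuting with
the translations, are all equivalent. -/
theorem stmt_19 {X : Type*} (σ τ : X → Equiv.Perm X)
    (hsol : IsSolution σ τ) (hper : Is2Permutational σ τ)
    (U T : X → X)
    (hU : ∀ x : X, U x = (σ x)⁻¹ x) (hT : ∀ x : X, T x = (τ x)⁻¹ x) :
    List.TFAE
      [Is2Reductive σ τ,
       IsDistributive σ τ,
       ∀ x : X, IsAuto σ τ (σ x) ∧ IsAuto σ τ (τ x),
       ∀ x : X, U ∘ ⇑(σ x) = ⇑(σ x) ∘ U ∧ T ∘ ⇑(τ x) = ⇑(τ x) ∘ T] := by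
  obtain ⟨hB1, hB2, hB3⟩ := hsol
  obtain ⟨hp1, hp2, hp3, hp4⟩ := hper
  tfae_have 1 → 2 := red_to_dist σ τ ⟨hB1, hB2, hB3⟩
  tfae_have 2 → 1 := by
    intro hd
    obtain ⟨hσ1, hσ2⟩ := dist_red_gen σ τ hB1 hp1 hd.1
    obtain ⟨hτ1, hτ2⟩ := dist_red_gen τ σ hB2 hp2 hd.2
    exact ⟨hσ1, hτ1, fun x y => hσ2 y x, fun x y => hτ2 y x⟩
  tfae_have 1 → 3 := by
    intro hred x
    have hcomm := red_comm σ τ ⟨hB1, hB2, hB3⟩ hred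
    have hd := red_to_dist σ τ ⟨hB1, hB2, hB3⟩ hred
    refine ⟨⟨fun y => hd.1 x y, fun y => ?_⟩, ⟨fun y => ?_, fun y => hd.2 x y⟩⟩
    · rw [hred.2.2.2 x y]
      exact Equiv.ext fun w => by
        simp only [Equiv.Perm.mul_apply]
        exact (hcomm x y w).symm
    · rw [hred.2.2.1 x y]
      exact Equiv.ext fun w => by
        simp only [Equiv.Perm.mul_apply]
        exact hcomm y x w
  tfae_have 3 → 2 := fun h => ⟨fun x y => (h x).1.1 y, fun x y => (h x).2.2 y⟩
  tfae_have 1 → 4 := by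
    intro hred x
    have hcσ : ∀ x y : X, σ x * σ y = σ y * σ x := fun x y => by
      rw [hB1 x y, hred.1 x y, hred.2.2.1 y x]
    have hcτ : ∀ x y : X, τ x * τ y = τ y * τ x := fun x y => by
      rw [hB2 x y, hred.2.1 x y, hred.2.2.2 y x]
    constructor
    · funext y
      simp only [Function.comp_apply, hU, hred.1 x y]
      have hcom : Commute (σ x) ((σ y)⁻¹) := Commute.inv_right (hcσ x y)
      have h : ((σ y)⁻¹ * σ x) y = (σ x * (σ y)⁻¹) y := by rw [hcom.eq]
      simpa only [Equiv.Perm.mul_apply] using h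
    · funext y
      simp only [Function.comp_apply, hT, hred.2.1 x y]
      have hcom : Commute (τ x) ((τ y)⁻¹) := Commute.inv_right (hcτ x y)
      have h : ((τ y)⁻¹ * τ x) y = (τ x * (τ y)⁻¹) y := by rw [hcom.eq]
      simpa only [Equiv.Perm.mul_apply] using h
  tfae_have 4 → 1 := by
    intro h4
    have hUc : ∀ x y : X, (σ (σ x y))⁻¹ (σ x y) = σ x ((σ y)⁻¹ y) := by
      intro x y
      have h := congrFun (h4 x).1 y
      simp only [Function.comp_apply, hU] at h
      exact h
    have hTc : ∀ x y : X, (τ (τ x y))⁻¹ (τ x y) = τ x ((τ y)⁻¹ y) := by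
      intro x y
      have h := congrFun (h4 x).2 y
      simp only [Function.comp_apply, hT] at h
      exact h
    have key1 := key_gen σ τ hB1 hp1 hp3 hUc
    have key2 := key_gen τ σ hB2 hp2 hp4 hTc
    refine ⟨fun x y => ?_, fun x y => ?_, fun x y => key1 y x, fun x y => key2 y x⟩
    · have h := hB1 y y
      rw [key1 y y] at h
      exact (hp1 x y y).trans (mul_right_cancel h).symm
    · have h := hB2 y y
      rw [key2 y y] at h
      exact (hp2 x y y).trans (mul_right_cancel h).symm
  tfae_finish
end
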